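/- arXiv:2003.04029 — 8 statements merged into one kernel-verified Lean document; each statement's English description precedes it below -/
import Mathlib

section
/- Let p ≥ 3 and q be distinct primes, and let F be the n-th layer of the cyclotomic Z_p-extension of Q (the unique subfield of Q(ζ_{p^{n+1}}) of degree p^n over Q). Then q is inert in F if and only if q^(p-1) ≢ 1 (mod p²). -/
/-!
Take primes `𝔭 ⊆ P` above `q` in `F ⊆ K = ℚ(ζ_{p^{n+1}})`. The inertia degree of `P` over
`ℚ` is the order `o` of `q` modulo `p^{n+1}`, and it factors as `f(𝔭) * f(P | 𝔭)` with
`f(𝔭) ≤ [F : ℚ] = p^n` and `f(P | 𝔭) ∣ [K : F] = p - 1`. So `q` is inert in `F`, i.e.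
`f(𝔭) = p^n`, iff `p^n ∣ o`. Lifting the exponent gives
`v_p(q^{(p-1)e} - 1) = v_p(q^{p-1} - 1) + v_p(e)`, whence `p^n ∣ o` iff `v_p(q^{p-1} - 1) = 1`.
-/

open NumberField Ideal Module

section LiftingTheExponent

theorem natCast_pow_eq_one_iff_dvd {q e N : ℕ} (hq : 0 < q) :
    (q : ZMod N) ^ e = 1 ↔ N ∣ q ^ e - 1 := by
  rw [← Nat.modEq_iff_dvd' (Nat.one_le_pow _ _ hq), ← ZMod.natCast_eq_natCast_iff]
  push_cast
  exact eq_comm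

theorem orderOf_natCast_ne_zero {q N : ℕ} [NeZero N] (h : q.Coprime N) :
    orderOf (q : ZMod N) ≠ 0 := by
  rw [← ZMod.coe_unitOfCoprime q h, orderOf_units]
  exact (orderOf_pos _).ne'

variable {p : ℕ} [hp : Fact p.Prime] {q : ℕ}

theorem dvd_pow_card_sub_one_sub_one (hpq : ¬ p ∣ q) : p ∣ q ^ (p - 1) - 1 :=
  (natCast_pow_eq_one_iff_dvd (Nat.pos_of_ne_zero (by rintro rfl; simp at hpq))).mp
    (ZMod.pow_card_sub_one_eq_one (by rwa [Ne, ZMod.natCast_eq_zero_iff]))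

theorem padicValNat_pow_mul_sub_one (hp2 : Odd p) (hq : 1 < q) (hpq : ¬ p ∣ q)
    {e : ℕ} (he : e ≠ 0) :
    padicValNat p (q ^ ((p - 1) * e) - 1) =
      padicValNat p (q ^ (p - 1) - 1) + padicValNat p e := by
  have hp1 : 0 < p - 1 := by have := hp.out.two_le; omega
  simpa [pow_mul] using padicValNat.pow_sub_pow (y := 1) hp2 (Nat.one_lt_pow hp1.ne' hq)
    (dvd_pow_card_sub_one_sub_one hpq) (fun h => hpq (hp.out.dvd_of_dvd_pow h)) he

theorem natCast_pow_sub_one_mul_eq_one_iff (hp2 : Odd p) (hq : 1 < q) (hpq : ¬ p ∣ q) {e : ℕ}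
    (he : e ≠ 0) (k : ℕ) :
    (q : ZMod (p ^ k)) ^ ((p - 1) * e) = 1 ↔
      k ≤ padicValNat p (q ^ (p - 1) - 1) + padicValNat p e := by
  have hp1 : 0 < p - 1 := by have := hp.out.two_le; omega
  have hne : q ^ ((p - 1) * e) - 1 ≠ 0 :=
    Nat.sub_ne_zero_of_lt (Nat.one_lt_pow (Nat.mul_ne_zero hp1.ne' he) hq)
  rw [natCast_pow_eq_one_iff_dvd (by omega), padicValNat_dvd_iff_le hne,
    padicValNat_pow_mul_sub_one hp2 hq hpq he]

theorem pow_dvd_orderOf_natCast_iff (hp2 : Odd p) (hq : 1 < q) (hpq : ¬ p ∣ q) {n : ℕ}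
    (hn : 1 ≤ n) :
    p ^ n ∣ orderOf (q : ZMod (p ^ (n + 1))) ↔ ¬ (q : ZMod (p ^ 2)) ^ (p - 1) = 1 := by
  set v := padicValNat p (q ^ (p - 1) - 1) with hv_def
  have hv : (q : ZMod (p ^ 2)) ^ (p - 1) = 1 ↔ 2 ≤ v := by
    simpa using natCast_pow_sub_one_mul_eq_one_iff hp2 hq hpq one_ne_zero 2
  rw [hv, not_le]
  have : NeZero (p ^ (n + 1)) := ⟨pow_ne_zero _ hp.out.ne_zero⟩
  have ho : orderOf (q : ZMod (p ^ (n + 1))) ≠ 0 := orderOf_natCast_ne_zero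
    (.pow_right _ (Nat.coprime_comm.mp (hp.out.coprime_iff_not_dvd.mpr hpq)))
  constructor
  · intro hdvd
    by_contra! h2
    have : (q : ZMod (p ^ (n + 1))) ^ ((p - 1) * p ^ (n - 1)) = 1 := by
      rw [natCast_pow_sub_one_mul_eq_one_iff hp2 hq hpq (pow_ne_zero _ hp.out.ne_zero),
        padicValNat.prime_pow, ← hv_def]
      omega
    have hdvd' : p * p ^ (n - 1) ∣ (p - 1) * p ^ (n - 1) := by
      rw [← pow_succ', Nat.sub_add_cancel hn]
      exact hdvd.trans (orderOf_dvd_of_pow_eq_one this)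
    have := Nat.le_of_dvd (by have := hp.out.two_le; omega)
      (Nat.dvd_of_mul_dvd_mul_right (pow_pos hp.out.pos _) hdvd')
    have := hp.out.pos
    omega
  · intro hv1
    have : (q : ZMod (p ^ (n + 1))) ^ ((p - 1) * orderOf (q : ZMod (p ^ (n + 1)))) = 1 := by
      rw [mul_comm, pow_mul, pow_orderOf_eq_one, one_pow]
    rw [natCast_pow_sub_one_mul_eq_one_iff hp2 hq hpq ho] at this
    rw [padicValNat_dvd_iff_le ho]
    omega

end LiftingTheExponent

theorem eq_pow_iff_pow_dvd_mul {p n f g : ℕ} (hp : p.Prime) (hf0 : 0 < f) (hf : f ≤ p ^ n)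
    (hg : g ∣ p - 1) : f = p ^ n ↔ p ^ n ∣ f * g := by
  refine ⟨fun h => h ▸ dvd_mul_right _ _, fun h => le_antisymm hf (Nat.le_of_dvd hf0 ?_)⟩
  have hpg : p.Coprime g := Nat.Coprime.coprime_dvd_right hg
    ((Nat.coprime_self_sub_right hp.one_lt.le).mpr (Nat.coprime_one_right p))
  exact (hpg.pow_left n).dvd_of_dvd_mul_right h

theorem Ideal.eq_of_le_of_absNorm_eq {S : Type*} [CommRing S] [IsDedekindDomain S]
    [Module.Free ℤ S] [Module.Finite ℤ S] {I J : Ideal S} (hIJ : I ≤ J)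
    (h : absNorm I = absNorm J) (hI : absNorm I ≠ 0) : I = J := by
  obtain ⟨C, rfl⟩ := Ideal.dvd_iff_le.mpr hIJ
  rw [map_mul] at h hI
  have hC : absNorm C = 1 := (mul_eq_left₀ (left_ne_zero_of_mul hI)).mp h
  rw [absNorm_eq_one_iff.mp hC, mul_top]

theorem span_natCast_le_of_liesOver {S : Type*} [CommRing S] {q : ℕ} (P : Ideal S)
    [P.LiesOver (span {(q : ℤ)})] : span {(q : S)} ≤ P := by
  rw [span_le, Set.singleton_subset_iff]
  simpa using (mem_of_liesOver P (span {(q : ℤ)}) q).mp (mem_span_singleton_self _)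

theorem inertiaDeg_dvd_finrank {F K : Type*} [Field F] [Field K] [NumberField F] [NumberField K]
    [Algebra F K] [IsGalois F K] (P : Ideal (𝓞 K)) [P.IsPrime] :
    P.inertiaDeg (𝓞 F) ∣ finrank F K := by
  rw [← IsGalois.card_aut_eq_finrank,
    ← ncard_primesOver_mul_ramificationIdxIn_mul_inertiaDegIn (P.under (𝓞 F)) (𝓞 K)
      Gal(K/F),
    inertiaDegIn_eq_inertiaDeg (P.under (𝓞 F)) P Gal(K/F)]
  exact Dvd.intro_left _ (mul_assoc _ _ _)

section InertiaDegree

variable {F : Type*} [Field F] [NumberField F] {q : ℕ}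

theorem absNorm_span_natCast_eq_pow_finrank (q : ℕ) :
    absNorm (span {(q : 𝓞 F)}) = q ^ finrank ℚ F := by
  rw [absNorm_span_natCast, RingOfIntegers.rank]

theorem inertiaDeg_le_finrank_of_liesOver (hq : q.Prime) (𝔭 : Ideal (𝓞 F)) [𝔭.IsPrime]
    [𝔭.LiesOver (span {(q : ℤ)})] : 𝔭.inertiaDeg ℤ ≤ finrank ℚ F := by
  rw [← Nat.pow_dvd_pow_iff_le_right hq.one_lt, pow_inertiaDeg,
    ← absNorm_span_natCast_eq_pow_finrank]
  exact absNorm_dvd_absNorm_of_le (span_natCast_le_of_liesOver 𝔭)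

theorem isPrime_span_natCast_iff_inertiaDeg_eq_finrank (hq : q.Prime) (𝔭 : Ideal (𝓞 F))
    [𝔭.IsPrime] [𝔭.LiesOver (span {(q : ℤ)})] :
    (span {(q : 𝓞 F)}).IsPrime ↔ 𝔭.inertiaDeg ℤ = finrank ℚ F := by
  have hle := span_natCast_le_of_liesOver (q := q) 𝔭
  rw [← (Nat.pow_right_injective hq.two_le).eq_iff, pow_inertiaDeg,
    ← absNorm_span_natCast_eq_pow_finrank]
  refine ⟨fun hprime => ?_, fun h => ?_⟩
  · have := hprime.isMaximal (by simp [hq.ne_zero])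
    rw [this.eq_of_le IsPrime.ne_top' hle]
  · rw [eq_of_le_of_absNorm_eq hle h.symm
      (by rw [absNorm_span_natCast_eq_pow_finrank]; exact pow_ne_zero _ hq.ne_zero)]
    infer_instance

end InertiaDegree

/-- Let p ≥ 3 and q be distinct primes, F the n-th layer of the cyclotomic
Z_p-extension of ℚ (the subfield of ℚ(ζ_{p^{n+1}}) of degree p^n over ℚ).
Then q is inert in F iff q^(p-1) ≢ 1 (mod p²). -/
theorem stmt0 (p q n : ℕ) (hp : p.Prime) (hq : q.Prime) (hp3 : 3 ≤ p) (hpq : p ≠ q)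
    (hn : 1 ≤ n)
    (K : Type*) [Field K] [CharZero K] (m : ℕ+) (hm : (m : ℕ) = p ^ (n + 1))
    [IsCyclotomicExtension {(m : ℕ)} ℚ K]
    (F : IntermediateField ℚ K) (hF : Module.finrank ℚ F = p ^ n) :
    (Ideal.span {(q : 𝓞 F)}).IsPrime ↔ ¬ ((q : ZMod (p ^ 2)) ^ (p - 1) = 1) := by
  have := Fact.mk hp
  have := Fact.mk hq
  have : NumberField K := IsCyclotomicExtension.numberField {(m : ℕ)} ℚ K
  have : IsGalois ℚ K := IsCyclotomicExtension.isGalois {(m : ℕ)} ℚ K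
  have hpq' : ¬ p ∣ q := fun h => hpq ((Nat.prime_dvd_prime_iff_eq hp hq).mp h)
  have hqp : ¬ q ∣ p := fun h => hpq ((Nat.prime_dvd_prime_iff_eq hq hp).mp h).symm
  have hFK : finrank F K = p - 1 := by
    have h := finrank_mul_finrank ℚ F K
    rw [hF, IsCyclotomicExtension.Rat.finrank (m : ℕ) K, hm,
      Nat.totient_prime_pow_succ hp] at h
    exact Nat.eq_of_mul_eq_mul_left (pow_pos hp.pos _) h
  obtain ⟨𝔭, _, _⟩ :=
    exists_maximal_ideal_liesOver_of_isIntegral (span {(q : ℤ)}) (S := 𝓞 F)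
  obtain ⟨P, _, _⟩ := exists_maximal_ideal_liesOver_of_isIntegral 𝔭 (S := 𝓞 K)
  have : P.LiesOver (span {(q : ℤ)}) := LiesOver.trans P 𝔭 _
  have hP : P.inertiaDeg ℤ = orderOf (q : ZMod (p ^ (n + 1))) := by
    rw [← hm, IsCyclotomicExtension.Rat.inertiaDeg_eq_of_not_dvd (m := m) q K P]
    rw [hm]
    exact fun h => hqp (hq.dvd_of_dvd_pow h)
  rw [isPrime_span_natCast_iff_inertiaDeg_eq_finrank hq 𝔭, hF,
    ← pow_dvd_orderOf_natCast_iff (hp.odd_of_ne_two (by omega)) hq.one_lt hpq' hn, ← hP,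
    inertiaDeg_tower 𝔭 P]
  exact eq_pow_iff_pow_dvd_mul hp (inertiaDeg_pos 𝔭 ℤ)
    (hF ▸ inertiaDeg_le_finrank_of_liesOver hq 𝔭) (hFK ▸ inertiaDeg_dvd_finrank P)
end

section
/- Let p, q be distinct primes with p odd, and n ≥ 1. The order of the class of q in (Z/p^{n+1}Z)^× is divisible by p^n if and only if q^(p-1) ≢ 1 (mod p²). -/
/-!
Let `x = q ^ (p - 1)`, so `p ∣ x - 1` by Fermat, and let `v = v_p(x - 1) ≥ 1`. Lifting the
exponent gives `v_p(x ^ p ^ i - 1) = v + i`, so `q ^ ((p - 1) p ^ i) ≡ 1 (mod p ^ j)` exactly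
when `j ≤ v + i`. Hence the order of `q` modulo `p ^ (n + 1)` divides `p ^ n (p - 1)`, and it is
divisible by `p ^ n` iff it does not divide `p ^ (n - 1) (p - 1)`, i.e. iff `n + 1 > v + n - 1`.
Both this and `q ^ (p - 1) ≢ 1 (mod p ^ 2)` say `v < 2`.
-/

theorem ZMod.natCast_eq_one_iff_dvd_sub_one {N a : ℕ} (ha : 1 ≤ a) :
    (a : ZMod N) = 1 ↔ N ∣ a - 1 := by
  rw [← Nat.cast_one, ZMod.natCast_eq_natCast_iff, Nat.ModEq.comm, Nat.modEq_iff_dvd' ha]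

theorem Nat.Prime.dvd_pow_sub_one_sub_one {p a : ℕ} (hp : p.Prime) (hpa : ¬ p ∣ a) :
    p ∣ a ^ (p - 1) - 1 := by
  have := Fact.mk hp
  have ha0 : (a : ZMod p) ≠ 0 := by rwa [Ne, ZMod.natCast_eq_zero_iff]
  have ha : 1 ≤ a ^ (p - 1) :=
    Nat.one_le_pow _ _ (Nat.pos_of_ne_zero (by rintro rfl; simp at hpa))
  rw [← ZMod.natCast_eq_one_iff_dvd_sub_one ha, Nat.cast_pow]
  exact ZMod.pow_card_sub_one_eq_one ha0

theorem ZMod.natCast_pow_prime_pow_eq_one_iff {p x : ℕ} (hp : p.Prime) (hodd : Odd p)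
    (hx : 1 < x) (hpx : p ∣ x - 1) (j k : ℕ) :
    (x : ZMod (p ^ j)) ^ p ^ k = 1 ↔ j ≤ padicValNat p (x - 1) + k := by
  have := Fact.mk hp
  have hpx' : ¬ p ∣ x := fun h =>
    hp.one_lt.ne' <| Nat.dvd_one.mp <| by simpa [Nat.sub_sub_self hx.le] using Nat.dvd_sub h hpx
  have hlte : padicValNat p (x ^ p ^ k - 1) = padicValNat p (x - 1) + k := by
    simpa using padicValNat.pow_sub_pow hodd hx hpx hpx' (pow_ne_zero k hp.ne_zero)
  have hpos : x ^ p ^ k - 1 ≠ 0 :=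
    Nat.sub_ne_zero_of_lt (Nat.one_lt_pow (pow_ne_zero k hp.ne_zero) hx)
  rw [← Nat.cast_pow, ZMod.natCast_eq_one_iff_dvd_sub_one (Nat.one_le_pow _ _ (by omega)),
    padicValNat_dvd_iff_le hpos, hlte]

theorem Nat.prime_pow_succ_dvd_iff_not_dvd {p m e k : ℕ} (hp : p.Prime) (hpm : ¬ p ∣ m)
    (he : e ∣ p ^ (k + 1) * m) : p ^ (k + 1) ∣ e ↔ ¬ e ∣ p ^ k * m := by
  constructor
  · intro hpe hem
    rw [pow_succ] at hpe
    exact hpm (Nat.dvd_of_mul_dvd_mul_left (pow_pos hp.pos k) (hpe.trans hem))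
  · intro hne
    obtain ⟨d, c, hd, hc, rfl⟩ := dvd_mul.mp he
    obtain ⟨a, ha, rfl⟩ := (Nat.dvd_prime_pow hp).mp hd
    rcases ha.lt_or_eq with ha | rfl
    · exact absurd (mul_dvd_mul (pow_dvd_pow p (Nat.lt_succ_iff.mp ha)) hc) hne
    · exact dvd_mul_right _ _

/-- The order of the class of q in (ℤ/p^{n+1}ℤ)ˣ is divisible by p^n iff
q^(p-1) ≢ 1 (mod p²). -/
theorem stmt2 (p q n : ℕ) (hp : p.Prime) (hq : q.Prime) (hodd : Odd p) (hpq : p ≠ q)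
    (hn : 1 ≤ n) :
    p ^ n ∣ orderOf (q : ZMod (p ^ (n + 1))) ↔ ¬ ((q : ZMod (p ^ 2)) ^ (p - 1) = 1) := by
  have := Fact.mk hp
  obtain ⟨k, rfl⟩ := Nat.exists_eq_add_of_le' hn
  have hp2 := hp.two_le
  have hx : 1 < q ^ (p - 1) := Nat.one_lt_pow (by omega) hq.one_lt
  have hfermat : p ∣ q ^ (p - 1) - 1 :=
    hp.dvd_pow_sub_one_sub_one fun h => hpq ((Nat.prime_dvd_prime_iff_eq hp hq).mp h)
  have hv : 1 ≤ padicValNat p (q ^ (p - 1) - 1) :=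
    one_le_padicValNat_of_dvd (by omega) hfermat
  have hpow (j i : ℕ) :
      (q : ZMod (p ^ j)) ^ ((p - 1) * p ^ i) = 1 ↔ j ≤ padicValNat p (q ^ (p - 1) - 1) + i := by
    rw [pow_mul, ← Nat.cast_pow]
    exact ZMod.natCast_pow_prime_pow_eq_one_iff hp hodd hx hfermat j i
  have horder : orderOf (q : ZMod (p ^ (k + 1 + 1))) ∣ p ^ (k + 1) * (p - 1) :=
    orderOf_dvd_of_pow_eq_one (by rw [mul_comm]; exact (hpow _ _).2 (by omega))
  have hpp : ¬ p ∣ p - 1 := fun h => by have := Nat.le_of_dvd (by omega) h; omega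
  have hrhs : (q : ZMod (p ^ 2)) ^ (p - 1) = 1 ↔ 2 ≤ padicValNat p (q ^ (p - 1) - 1) + 0 := by
    simpa using hpow 2 0
  rw [Nat.prime_pow_succ_dvd_iff_not_dvd hp hpp horder, mul_comm, orderOf_dvd_iff_pow_eq_one,
    hpow, hrhs]
  omega
end

section
/- Let F/Q be a Galois extension of degree p^n (p prime, n ≥ 1) in which p is totally ramified, with 𝔭 the unique prime above p. If λ is a unit of O_F with Norm_{F/Q}(λ) = 1, then λ ≡ 1 (mod 𝔭). -/
/-!
The residue field `𝓞 F ⧸ 𝔭` has `N 𝔭 = p` elements, since `N 𝔭 ^ p ^ n = N (p) = p ^ p ^ n`.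
Each Galois automorphism maps `𝔭` to a prime containing `p`, hence to `𝔭`, so it induces a ring
endomorphism of `𝔽_p`, which must be the identity. Reducing `N λ = ∏ σ λ` modulo `𝔭` therefore
gives `1 ≡ λ ^ p ^ n ≡ λ`, the last step by Fermat's little theorem in `𝔽_p`.
-/

open NumberField

section PrimeCard

variable {S : Type*} [Ring S] {p : ℕ}

theorem nonempty_ringEquiv_zmod_of_card_eq_prime (hp : p.Prime) (hcard : Nat.card S = p) :
    Nonempty (ZMod p ≃+* S) := by
  have : Finite S := Nat.finite_of_card_ne_zero (hcard ▸ hp.ne_zero)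
  have : Fintype S := Fintype.ofFinite S
  exact ⟨ZMod.ringEquivOfPrime S hp (Nat.card_eq_fintype_card (α := S) ▸ hcard)⟩

theorem RingHom.eq_id_of_card_eq_prime (hp : p.Prime) (hcard : Nat.card S = p) (f : S →+* S) :
    f = RingHom.id S := by
  obtain ⟨e⟩ := nonempty_ringEquiv_zmod_of_card_eq_prime hp hcard
  have hcomp : f.comp e.toRingHom = (RingHom.id S).comp e.toRingHom := Subsingleton.elim _ _
  ext x
  obtain ⟨a, rfl⟩ := e.surjective x
  exact RingHom.congr_fun hcomp a

theorem pow_prime_pow_eq_self_of_card_eq_prime (hp : p.Prime) (hcard : Nat.card S = p) (n : ℕ)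
    (x : S) : x ^ p ^ n = x := by
  have : Fact p.Prime := ⟨hp⟩
  obtain ⟨e⟩ := nonempty_ringEquiv_zmod_of_card_eq_prime hp hcard
  obtain ⟨a, rfl⟩ := e.surjective x
  rw [← map_pow, ZMod.pow_card_pow]

end PrimeCard

namespace Ideal

variable {R : Type*} [CommRing R]

theorem Quotient.mk_apply_eq_of_card_eq_prime {P : Ideal R} {p : ℕ} (hp : p.Prime)
    (hcard : Nat.card (R ⧸ P) = p) (τ : R →+* R) (hτ : P ≤ P.comap τ) (x : R) :
    Quotient.mk P (τ x) = Quotient.mk P x := by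
  rw [← quotientMap_mk (H := hτ), RingHom.eq_id_of_card_eq_prime hp hcard (quotientMap P τ hτ),
    RingHom.id_apply]

theorem le_comap_of_span_natCast_eq_pow {P : Ideal R} [P.IsPrime] {p e : ℕ} (he : e ≠ 0)
    (h : span {(p : R)} = P ^ e) (τ : R →+* R) : P ≤ P.comap τ := by
  have hp : (p : R) ∈ P := pow_le_self he (h ▸ mem_span_singleton_self _)
  refine IsPrime.le_of_pow_le (n := e) ?_
  rw [← h, span_singleton_le_iff_mem, mem_comap, map_natCast]
  exact hp

theorem absNorm_eq_of_span_natCast_eq_pow {S : Type*} [CommRing S] [IsDedekindDomain S]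
    [Module.Free ℤ S] [Module.Finite ℤ S] {P : Ideal S} {p : ℕ}
    (h : span {(p : S)} = P ^ Module.finrank ℤ S) : absNorm P = p := by
  have hrank : Module.finrank ℤ S ≠ 0 := Module.finrank_pos.ne'
  have := congrArg absNorm h
  rw [absNorm_span_natCast, map_pow] at this
  exact Nat.pow_left_injective hrank this.symm

end Ideal

namespace NumberField.RingOfIntegers

variable {F : Type*} [Field F] [NumberField F] [IsGalois ℚ F]

theorem algebraMap_norm_eq_prod_galRestrict (x : 𝓞 F) :
    algebraMap ℤ (𝓞 F) (Algebra.norm ℤ x) = ∏ σ : F ≃ₐ[ℚ] F, galRestrict ℤ ℚ F (𝓞 F) σ x := by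
  rw [prod_galRestrict_eq_norm ℤ ℚ F (𝓞 F) x]
  congr 1
  apply IsFractionRing.injective ℤ ℚ
  rw [IsIntegralClosure.algebraMap_mk', ← Algebra.coe_norm_int]
  rfl

theorem mk_algebraMap_norm_eq_pow {P : Ideal (𝓞 F)}
    (hfix : ∀ (σ : F ≃ₐ[ℚ] F) (x : 𝓞 F),
      Ideal.Quotient.mk P (galRestrict ℤ ℚ F (𝓞 F) σ x) = Ideal.Quotient.mk P x)
    (x : 𝓞 F) :
    Ideal.Quotient.mk P (algebraMap ℤ (𝓞 F) (Algebra.norm ℤ x)) =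
      Ideal.Quotient.mk P x ^ Module.finrank ℚ F := by
  rw [algebraMap_norm_eq_prod_galRestrict, map_prod, Finset.prod_congr rfl fun σ _ => hfix σ x,
    Finset.prod_const, Finset.card_univ, ← Nat.card_eq_fintype_card, IsGalois.card_aut_eq_finrank]

end NumberField.RingOfIntegers

theorem stmt4_general (p n : ℕ) (hp : p.Prime)
    (F : Type*) [Field F] [NumberField F] [IsGalois ℚ F]
    (hdeg : Module.finrank ℚ F = p ^ n)
    (P : Ideal (𝓞 F)) (hP : P.IsPrime)
    (hram : Ideal.span {(p : 𝓞 F)} = P ^ (p ^ n))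
    (lam : 𝓞 F) (hnorm : Algebra.norm ℤ lam = 1) :
    lam - 1 ∈ P := by
  have hrank : Module.finrank ℤ (𝓞 F) = p ^ n := (RingOfIntegers.rank F).trans hdeg
  have hcard : Nat.card (𝓞 F ⧸ P) = p := by
    rw [← Submodule.cardQuot_apply, ← Ideal.absNorm_apply]
    exact Ideal.absNorm_eq_of_span_natCast_eq_pow (hrank ▸ hram)
  have hfix (σ : F ≃ₐ[ℚ] F) (x : 𝓞 F) :
      Ideal.Quotient.mk P (galRestrict ℤ ℚ F (𝓞 F) σ x) = Ideal.Quotient.mk P x :=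
    Ideal.Quotient.mk_apply_eq_of_card_eq_prime hp hcard (galRestrict ℤ ℚ F (𝓞 F) σ).toRingHom
      (Ideal.le_comap_of_span_natCast_eq_pow (pow_ne_zero n hp.ne_zero) hram _) x
  have hnorm_mod := RingOfIntegers.mk_algebraMap_norm_eq_pow hfix lam
  rw [hnorm, map_one, map_one, hdeg,
    pow_prime_pow_eq_self_of_card_eq_prime hp hcard n] at hnorm_mod
  rw [← Ideal.Quotient.eq, map_one, hnorm_mod]

/-- Under the same total ramification setup, a unit λ of O_F with norm 1
satisfies λ ≡ 1 (mod 𝔭). -/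
theorem stmt4 (p n : ℕ) (hp : p.Prime) (hn : 1 ≤ n)
    (F : Type*) [Field F] [NumberField F] [IsGalois ℚ F]
    (hdeg : Module.finrank ℚ F = p ^ n)
    (P : Ideal (𝓞 F)) (hP : P.IsPrime)
    (hram : Ideal.span {(p : 𝓞 F)} = P ^ (p ^ n))
    (lam : 𝓞 F) (hu : IsUnit lam) (hnorm : Algebra.norm ℤ lam = 1) :
    lam - 1 ∈ P :=
  stmt4_general p n hp F hdeg P hP hram lam hnorm
end

section
/- Let p ≠ 3 be a prime and let F/Q be a Galois extension of degree p^n in which p is totally ramified. Then there are no units λ, μ ∈ O_F^× with λ + μ = 1. -/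
open NumberField FractionalIdeal IsDedekindDomain

/-!
Let `𝔭` be the prime of `𝓞 F` above `p`. Comparing norms in `(p) = 𝔭 ^ [F : ℚ]` shows that
`𝓞 F ⧸ 𝔭` has `p` elements, and `𝔭` is the only prime containing `p`, so every `σ ∈ Gal(F/ℚ)`
fixes `𝔭` and induces the identity on the residue field `𝔽_p`. Hence for a unit `u`,
`±1 = N(u) = ∏ σ u ≡ u ^ [F : ℚ] ≡ u (mod 𝔭)` by Fermat. Reducing `λ + μ = 1` modulo `𝔭` then
gives `±1 ± 1 = 1` in `𝔽_p`, which forces `p = 3`.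
-/

theorem RingHom.eq_id_of_natCard_eq_prime {K : Type*} [Ring K] [_root_.Finite K] {p : ℕ}
    (hp : p.Prime) (hK : Nat.card K = p) (φ : K →+* K) : φ = RingHom.id K := by
  have := Fintype.ofFinite K
  let e := ZMod.ringEquivOfPrime K hp (Nat.card_eq_fintype_card (α := K) ▸ hK)
  have hφe : φ.comp (e : ZMod p →+* K) = (RingHom.id K).comp e := Subsingleton.elim _ _
  ext x
  obtain ⟨z, rfl⟩ := e.surjective x
  exact DFunLike.congr_fun hφe z

namespace Ideal

variable {R : Type*} [CommRing R]

theorem comap_eq_self_of_pow_le_span_natCast (σ : R →+* R) {P : Ideal R} [P.IsMaximal] {p k : ℕ}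
    (hpP : (p : R) ∈ P) (hk : P ^ k ≤ span {(p : R)}) : P.comap σ = P := by
  have hp : (p : R) ∈ P.comap σ := by rwa [mem_comap, map_natCast]
  have hle : P ≤ P.comap σ := IsPrime.le_of_pow_le (hk.trans (span_le.2 (by simpa using hp)))
  exact (IsMaximal.eq_of_le ‹_› (comap_ne_top σ IsPrime.ne_top') hle).symm

theorem Quotient.mk_apply_eq_of_natCard_eq_prime (σ : R →+* R) {P : Ideal R} (hσ : P.comap σ = P)
    {p : ℕ} (hp : p.Prime) (hcard : Nat.card (R ⧸ P) = p) (x : R) :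
    Quotient.mk P (σ x) = Quotient.mk P x := by
  have := Nat.finite_of_card_ne_zero (hcard ▸ hp.ne_zero)
  have hid := RingHom.eq_id_of_natCard_eq_prime hp hcard (quotientMap P σ hσ.ge)
  simpa using DFunLike.congr_fun hid (Quotient.mk P x)

end Ideal

namespace NumberField

variable {F : Type*} [Field F] [NumberField F]

theorem absNorm_eq_of_span_natCast_eq_pow_finrank {p : ℕ} {P : Ideal (𝓞 F)}
    (h : Ideal.span {(p : 𝓞 F)} = P ^ Module.finrank ℚ F) : Ideal.absNorm P = p :=
  Nat.pow_left_injective (n := Module.finrank ℚ F) Module.finrank_pos.ne' <| by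
    simp only [← map_pow, ← h, Ideal.absNorm_span_natCast, RingOfIntegers.rank]

theorem prod_galRestrict_eq_algebraMap_norm [IsGalois ℚ F] (x : 𝓞 F) :
    ∏ σ : Gal(F/ℚ), galRestrict ℤ ℚ F (𝓞 F) σ x = algebraMap ℤ (𝓞 F) (Algebra.norm ℤ x) := by
  rw [prod_galRestrict_eq_norm]
  congr 1
  apply (algebraMap ℤ ℚ).injective_int
  rw [IsIntegralClosure.algebraMap_mk']
  exact_mod_cast (Algebra.coe_norm_int x).symm

theorem quotient_mk_unit_eq_one_or_eq_neg_one [IsGalois ℚ F] {P : Ideal (𝓞 F)} [P.IsMaximal]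
    [Finite (𝓞 F ⧸ P)] {n : ℕ} (hdeg : Module.finrank ℚ F = Nat.card (𝓞 F ⧸ P) ^ n)
    (hfix : ∀ (σ : Gal(F/ℚ)) (x : 𝓞 F),
      Ideal.Quotient.mk P (galRestrict ℤ ℚ F (𝓞 F) σ x) = Ideal.Quotient.mk P x)
    (u : (𝓞 F)ˣ) :
    Ideal.Quotient.mk P (u : 𝓞 F) = 1 ∨ Ideal.Quotient.mk P (u : 𝓞 F) = -1 := by
  have := Fintype.ofFinite (𝓞 F ⧸ P)
  let := Ideal.Quotient.field P
  have hnorm : Algebra.norm ℤ (u : 𝓞 F) = 1 ∨ Algebra.norm ℤ (u : 𝓞 F) = -1 :=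
    Int.isUnit_iff.mp (u.isUnit.map (Algebra.norm ℤ))
  have hnorm_congr : Ideal.Quotient.mk P (u : 𝓞 F) =
      Ideal.Quotient.mk P (algebraMap ℤ (𝓞 F) (Algebra.norm ℤ (u : 𝓞 F))) := by
    rw [← prod_galRestrict_eq_algebraMap_norm, map_prod, Finset.prod_congr rfl fun σ _ => hfix σ _,
      Finset.prod_const, Finset.card_univ, ← Nat.card_eq_fintype_card, IsGalois.card_aut_eq_finrank,
      hdeg, Nat.card_eq_fintype_card]
    exact (FiniteField.pow_card_pow (K := 𝓞 F ⧸ P) n _).symm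
  rcases hnorm with h | h <;> simp [hnorm_congr, h]

end NumberField

theorem CharP.add_ne_one_of_eq_one_or_eq_neg_one {K : Type*} [CommRing K] [Nontrivial K] (p : ℕ)
    [CharP K p] (hp3 : p ≠ 3) {a b : K} (ha : a = 1 ∨ a = -1) (hb : b = 1 ∨ b = -1) :
    a + b ≠ 1 := by
  have h3 : (3 : K) ≠ 0 := by
    intro h
    have hdvd : p ∣ 3 := (CharP.cast_eq_zero_iff K p 3).mp (by exact_mod_cast h)
    have := CharP.char_ne_one K p
    rcases (Nat.dvd_prime Nat.prime_three).mp hdvd with h1 | h1 <;> contradiction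
  rcases ha with rfl | rfl <;> rcases hb with rfl | rfl <;> intro h
  · exact one_ne_zero (α := K) (by linear_combination h)
  · exact one_ne_zero (α := K) (by linear_combination -h)
  · exact one_ne_zero (α := K) (by linear_combination -h)
  · exact h3 (by linear_combination -h)

theorem stmt5_general (p n : ℕ) (hp : p.Prime) (hp3 : p ≠ 3)
    (F : Type*) [Field F] [NumberField F] [IsGalois ℚ F]
    (hdeg : Module.finrank ℚ F = p ^ n)
    (P : Ideal (𝓞 F)) (hP : P.IsPrime)
    (hram : Ideal.span {(p : 𝓞 F)} = P ^ (p ^ n)) :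
    ¬ ∃ lam mu : (𝓞 F)ˣ, (lam : 𝓞 F) + (mu : 𝓞 F) = 1 := by
  rintro ⟨lam, mu, hsum⟩
  have hpP : (p : 𝓞 F) ∈ P :=
    Ideal.pow_le_self (pow_ne_zero n hp.ne_zero) (hram ▸ Ideal.mem_span_singleton_self _)
  have hPbot : P ≠ ⊥ := fun h => by simp [h, hp.ne_zero] at hpP
  have := hP.isMaximal hPbot
  have hcard : Nat.card (𝓞 F ⧸ P) = p := by
    rw [← Submodule.cardQuot_apply, ← Ideal.absNorm_apply]
    exact absNorm_eq_of_span_natCast_eq_pow_finrank (hdeg ▸ hram)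
  have := Nat.finite_of_card_ne_zero (hcard ▸ hp.ne_zero)
  have hfix (σ : Gal(F/ℚ)) := Ideal.Quotient.mk_apply_eq_of_natCard_eq_prime _
    (Ideal.comap_eq_self_of_pow_le_span_natCast (galRestrict ℤ ℚ F (𝓞 F) σ : 𝓞 F →+* 𝓞 F)
      hpP hram.ge) hp hcard
  have : CharP (𝓞 F ⧸ P) p := (CharP.charP_iff_prime_eq_zero hp).2 <| by
    rwa [← map_natCast (Ideal.Quotient.mk P), Ideal.Quotient.eq_zero_iff_mem]
  refine CharP.add_ne_one_of_eq_one_or_eq_neg_one p hp3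
    (quotient_mk_unit_eq_one_or_eq_neg_one (hcard ▸ hdeg) hfix lam)
    (quotient_mk_unit_eq_one_or_eq_neg_one (hcard ▸ hdeg) hfix mu) ?_
  rw [← map_add, hsum, map_one]

/-- For a prime p ≠ 3 and F/ℚ Galois of degree p^n with p totally ramified,
the unit equation λ + μ = 1 has no solutions in units of O_F. -/
theorem stmt5 (p n : ℕ) (hp : p.Prime) (hp3 : p ≠ 3) (hn : 1 ≤ n)
    (F : Type*) [Field F] [NumberField F] [IsGalois ℚ F]
    (hdeg : Module.finrank ℚ F = p ^ n)
    (P : Ideal (𝓞 F)) (hP : P.IsPrime)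
    (hram : Ideal.span {(p : 𝓞 F)} = P ^ (p ^ n)) :
    ¬ ∃ lam mu : (𝓞 F)ˣ, (lam : 𝓞 F) + (mu : 𝓞 F) = 1 :=
  stmt5_general p n hp hp3 F hdeg P hP hram
end

section
/- Let p ≥ 5 be prime and F/Q a Galois extension of degree p^n in which p is totally ramified and 2 is inert; write 𝔮 = 2O_F and S = {𝔮}. Then every solution (λ, μ) of λ + μ = 1 in S-units of F satisfies one of: (i) ord_𝔮(λ) = 1 and ord_𝔮(μ) = 0; (ii) ord_𝔮(λ) = 0 and ord_𝔮(μ) = 1; (iii) ord_𝔮(λ) = ord_𝔮(μ) = -1. -/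
/-!
Write `λ = u * 2 ^ a` and `μ = w * 2 ^ b` with units `u`, `w` of `𝓞 F`. As `𝔭` is totally
ramified, its residue field is `𝔽_p` and the Galois group acts trivially on it, so every unit is
congruent modulo `𝔭` to its norm `±1`. A unit `≡ 1 mod 4` has norm `≡ 1 mod 4`, hence norm `1`
(2 is not a unit), hence is `≡ 1 mod 𝔭`. For `a, b ≥ 0` these congruences, together with
`p ∤ 2, 3`, leave only `(a, b) = (1, 0)` or `(0, 1)`; the substitutions `(λ, μ) ↦ (-λ/μ, 1/μ)`
and `(1/λ, -μ/λ)` reduce every solution to one with `a, b ≥ 0`.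
-/

open NumberField FractionalIdeal IsDedekindDomain

section PrimeResidueRing

variable {R : Type*} [CommRing R] {P : Ideal R} {p : ℕ} [Fact p.Prime]

lemma Ideal.nonempty_ringEquiv_zmod_of_card (h : Nat.card (R ⧸ P) = p) :
    Nonempty (ZMod p ≃+* R ⧸ P) := by
  have : Finite (R ⧸ P) := Nat.finite_of_card_ne_zero (h ▸ NeZero.ne p)
  let := Fintype.ofFinite (R ⧸ P)
  exact ⟨ZMod.ringEquivOfPrime _ Fact.out (by rwa [← Nat.card_eq_fintype_card])⟩

lemma Ideal.natCast_mem_iff_dvd (h : Nat.card (R ⧸ P) = p) (k : ℕ) : (k : R) ∈ P ↔ p ∣ k := by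
  obtain ⟨e⟩ := Ideal.nonempty_ringEquiv_zmod_of_card h
  rw [← Ideal.Quotient.eq_zero_iff_mem, map_natCast, ← map_natCast e,
    map_eq_zero_iff e e.injective, ZMod.natCast_eq_zero_iff]

lemma Ideal.sub_mem_of_le_comap (h : Nat.card (R ⧸ P) = p) {f : R →+* R} (hf : P ≤ P.comap f)
    (x : R) : f x - x ∈ P := by
  obtain ⟨e⟩ := Ideal.nonempty_ringEquiv_zmod_of_card h
  -- there is only one ring homomorphism out of `ZMod p`
  have hfe : (Ideal.quotientMap P f hf).comp e.toRingHom = e.toRingHom := Subsingleton.elim _ _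
  rw [← Ideal.Quotient.eq, ← Ideal.quotientMap_mk (H := hf),
    ← e.apply_symm_apply (Ideal.Quotient.mk P x)]
  exact congr($hfe _)

lemma Ideal.pow_pow_sub_mem (h : Nat.card (R ⧸ P) = p) (m : ℕ) (x : R) : x ^ p ^ m - x ∈ P := by
  obtain ⟨e⟩ := Ideal.nonempty_ringEquiv_zmod_of_card h
  rw [← Ideal.Quotient.eq, map_pow, ← e.apply_symm_apply (Ideal.Quotient.mk P x), ← map_pow,
    ZMod.pow_card_pow]

lemma Ideal.prod_sub_mem_of_card_eq_pow {G : Type*} [Fintype G] {m : ℕ}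
    (hG : Nat.card G = p ^ m) (h : Nat.card (R ⧸ P) = p) (f : G → R →+* R)
    (hf : ∀ g, P ≤ P.comap (f g)) (x : R) : ∏ g, f g x - x ∈ P := by
  have hfx (g : G) : Ideal.Quotient.mk P (f g x) = Ideal.Quotient.mk P x :=
    Ideal.Quotient.eq.mpr (Ideal.sub_mem_of_le_comap h (hf g) x)
  rw [← Ideal.Quotient.eq, map_prod, Finset.prod_congr rfl fun g _ ↦ hfx g, Finset.prod_const,
    Finset.card_univ, ← Nat.card_eq_fintype_card, hG, ← map_pow, Ideal.Quotient.eq]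
  exact Ideal.pow_pow_sub_mem h m x

end PrimeResidueRing

lemma Ideal.prod_sub_one_mem {R G : Type*} [CommRing R] [Fintype G] {I : Ideal R}
    (f : G → R →+* R) (hf : ∀ g, I ≤ I.comap (f g)) {x : R} (hx : x - 1 ∈ I) :
    ∏ g, f g x - 1 ∈ I := by
  have hfx (g : G) : Ideal.Quotient.mk I (f g x) = 1 := by
    rw [← map_one (Ideal.Quotient.mk I), Ideal.Quotient.eq, ← map_one (f g), ← map_sub]
    exact hf g hx
  rw [← Ideal.Quotient.eq, map_prod, Finset.prod_congr rfl fun g _ ↦ hfx g,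
    Finset.prod_const_one, map_one]

lemma Ideal.le_comap_of_span_natCast_eq_pow_s8 {R : Type*} [CommRing R] {P : Ideal R}
    (hP : P.IsPrime) {m e : ℕ} (he : e ≠ 0) (h : Ideal.span {(m : R)} = P ^ e) (f : R →+* R) :
    P ≤ P.comap f := by
  have hm : (m : R) ∈ P := Ideal.pow_le_self he (h ▸ Ideal.mem_span_singleton_self _)
  have := hP.comap f
  rw [← Ideal.IsPrime.pow_le_iff he, ← h, Ideal.span_le, Set.singleton_subset_iff]
  simpa using hm

lemma Ideal.natCard_quotient_of_span_natCast_eq_pow {S : Type*} [CommRing S]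
    [IsDedekindDomain S] [Module.Free ℤ S] [Module.Finite ℤ S] {P : Ideal S} {p : ℕ}
    (h : Ideal.span {(p : S)} = P ^ Module.finrank ℤ S) : Nat.card (S ⧸ P) = p := by
  have hnorm := Ideal.absNorm_span_natCast (S := S) p
  rw [h, map_pow] at hnorm
  rw [← Submodule.cardQuot_apply, ← Ideal.absNorm_apply]
  exact Nat.pow_left_injective Module.finrank_pos.ne' hnorm

section GaloisUnits

variable {F : Type*} [Field F] [NumberField F] [IsGalois ℚ F]

lemma NumberField.prod_galRestrict_unit_eq_one_or_neg_one (u : (𝓞 F)ˣ) :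
    ∏ σ : F ≃ₐ[ℚ] F, galRestrict ℤ ℚ F (𝓞 F) σ u = 1 ∨
      ∏ σ : F ≃ₐ[ℚ] F, galRestrict ℤ ℚ F (𝓞 F) σ u = -1 := by
  have hnorm : ∏ σ : F ≃ₐ[ℚ] F, galRestrict ℤ ℚ F (𝓞 F) σ u =
      algebraMap ℤ (𝓞 F) (Algebra.intNormAux ℤ ℚ F (𝓞 F) u) :=
    prod_galRestrict_eq_norm ℤ ℚ F (𝓞 F) u
  rw [hnorm]
  rcases Int.isUnit_iff.mp (u.isUnit.map (Algebra.intNormAux ℤ ℚ F (𝓞 F))) with h | h <;>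
    simp [h]

variable {P : Ideal (𝓞 F)} {p m : ℕ} [Fact p.Prime] (hdeg : Module.finrank ℚ F = p ^ m)
  (hcard : Nat.card (𝓞 F ⧸ P) = p)
  (hstable : ∀ σ : F ≃ₐ[ℚ] F, P ≤ P.comap (galRestrict ℤ ℚ F (𝓞 F) σ : 𝓞 F →+* 𝓞 F))
include hdeg hcard hstable

lemma NumberField.unit_sub_one_mem_or_add_one_mem (u : (𝓞 F)ˣ) :
    (u : 𝓞 F) - 1 ∈ P ∨ (u : 𝓞 F) + 1 ∈ P := by
  have hcong := Ideal.prod_sub_mem_of_card_eq_pow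
    ((IsGalois.card_aut_eq_finrank ℚ F).trans hdeg) hcard _ hstable u
  rcases prod_galRestrict_unit_eq_one_or_neg_one u with h | h <;>
    simp only [RingHom.coe_coe, h] at hcong
  · exact .inl (by simpa using P.neg_mem hcong)
  · exact .inr (by simpa [add_comm] using P.neg_mem hcong)

lemma NumberField.unit_sub_one_mem_of_sub_one_mem_span_four (h2 : ¬IsUnit (2 : 𝓞 F))
    {u : (𝓞 F)ˣ} (hu : (u : 𝓞 F) - 1 ∈ Ideal.span {4}) : (u : 𝓞 F) - 1 ∈ P := by
  have hcong := Ideal.prod_sub_mem_of_card_eq_pow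
    ((IsGalois.card_aut_eq_finrank ℚ F).trans hdeg) hcard _ hstable u
  have hfour := Ideal.prod_sub_one_mem
    (fun σ : F ≃ₐ[ℚ] F ↦ (galRestrict ℤ ℚ F (𝓞 F) σ : 𝓞 F →+* 𝓞 F))
    (fun σ ↦ by simp [Ideal.span_le, map_ofNat]) hu
  rcases prod_galRestrict_unit_eq_one_or_neg_one u with h | h <;>
    simp only [RingHom.coe_coe, h] at hcong hfour
  · simpa using P.neg_mem hcong
  · obtain ⟨t, ht⟩ := Ideal.mem_span_singleton'.mp hfour
    refine absurd (IsUnit.of_mul_eq_one (a := (2 : 𝓞 F)) (-t) ?_) h2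
    exact mul_left_cancel₀ two_ne_zero (by linear_combination -ht)

end GaloisUnits

section FractionalIdeal

variable {R K : Type*} [CommRing R] [IsDedekindDomain R] [Field K] [Algebra R K]
  [IsFractionRing R K]

lemma FractionalIdeal.spanSingleton_zpow (x : K) (a : ℤ) :
    spanSingleton (nonZeroDivisors R) x ^ a = spanSingleton (nonZeroDivisors R) (x ^ a) := by
  obtain n | n := a
  · simp only [Int.ofNat_eq_natCast, zpow_natCast, spanSingleton_pow]
  · rw [zpow_negSucc, zpow_negSucc, spanSingleton_pow, spanSingleton_inv]

lemma FractionalIdeal.exists_unit_mul_zpow_of_spanSingleton_eq {x : K} {c : R} {a : ℤ}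
    (h : spanSingleton (nonZeroDivisors R) x =
      (Ideal.span {c} : FractionalIdeal (nonZeroDivisors R) K) ^ a) :
    ∃ u : Rˣ, algebraMap R K u * algebraMap R K c ^ a = x := by
  rw [coeIdeal_span_singleton, spanSingleton_zpow, spanSingleton_eq_spanSingleton] at h
  obtain ⟨z, hz⟩ := h
  refine ⟨z⁻¹, ?_⟩
  rw [← hz, Units.smul_def, Algebra.smul_def, ← mul_assoc, ← map_mul, Units.inv_mul, map_one,
    one_mul]

end FractionalIdeal

theorem exponents_of_unit_mul_two_pow_add_eq_one {R : Type*} [CommRing R] {P : Ideal R}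
    (hP : P.IsPrime) (h2 : (2 : R) ∉ P) (h3 : (3 : R) ∉ P) (h2unit : ¬IsUnit (2 : R))
    (hsign : ∀ u : Rˣ, (u : R) - 1 ∈ P ∨ (u : R) + 1 ∈ P)
    (hfour : ∀ u : Rˣ, (u : R) - 1 ∈ Ideal.span {4} → (u : R) - 1 ∈ P)
    {u w : Rˣ} {s t : ℕ} (h : (u : R) * 2 ^ s + w * 2 ^ t = 1) :
    (s = 1 ∧ t = 0) ∨ (s = 0 ∧ t = 1) := by
  wlog hst : s ≤ t generalizing u w s t
  · have := this (w := u) (u := w) (by rw [add_comm, h]) (by omega)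
    tauto
  obtain _ | j := s
  · simp only [pow_zero, mul_one] at h
    obtain _ | _ | k := t
    · have h1 : (1 : R) ∉ P := (P.ne_top_iff_one).mp hP.ne_top
      simp only [pow_zero, mul_one] at h
      rcases hsign u with hu | hu <;> rcases hsign w with hw | hw
      · exact (h1 <| by convert P.neg_mem (P.add_mem hu hw) using 1; linear_combination h).elim
      · exact (h1 <| by convert P.add_mem hu hw using 1; linear_combination -h).elim
      · exact (h1 <| by convert P.add_mem hu hw using 1; linear_combination -h).elim
      · exact (h3 <| by convert P.add_mem hu hw using 1; linear_combination -h).elim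
    · tauto
    · -- `u ≡ 1 mod 4`, so `u ≡ 1 mod P` and then `w * 2 ^ (k + 2) = 1 - u ∈ P`
      have hu : (u : R) - 1 ∈ Ideal.span {4} :=
        Ideal.mem_span_singleton'.mpr ⟨-(w * 2 ^ k), by linear_combination -h⟩
      have hw : (w : R) * 2 ^ (k + 2) ∈ P := by
        convert P.neg_mem (hfour u hu) using 1
        linear_combination h
      rcases hP.mem_or_mem hw with hw | hw
      · exact (hP.ne_top (P.eq_top_of_isUnit_mem hw w.isUnit)).elim
      · exact (h2 (hP.mem_of_pow_mem _ hw)).elim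
  · obtain ⟨k, rfl⟩ : ∃ k, t = k + 1 := ⟨t - 1, by omega⟩
    exact (h2unit (isUnit_of_dvd_one ⟨u * 2 ^ j + w * 2 ^ k, by linear_combination -h⟩)).elim

theorem exponents_of_unit_mul_zpow_add_eq_one {K : Type*} [Field K] {U : Subgroup Kˣ}
    (hU : -1 ∈ U) {π : K} (hπ : π ≠ 0)
    (hnat : ∀ u ∈ U, ∀ w ∈ U, ∀ s t : ℕ, (u : K) * π ^ s + w * π ^ t = 1 →
      (s = 1 ∧ t = 0) ∨ (s = 0 ∧ t = 1))
    {u w : Kˣ} (hu : u ∈ U) (hw : w ∈ U) {a b : ℤ} (h : (u : K) * π ^ a + w * π ^ b = 1) :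
    (a = 1 ∧ b = 0) ∨ (a = 0 ∧ b = 1) ∨ (a = -1 ∧ b = -1) := by
  wlog hba : b ≤ a generalizing u w a b
  · have := this hw hu (by rw [add_comm, h]) (by omega)
    omega
  obtain ⟨s, hs⟩ : ∃ s : ℕ, a - b = s := ⟨(a - b).toNat, by omega⟩
  rcases le_or_gt 0 b with hb | hb
  · lift b to ℕ using hb
    lift a to ℕ using by omega
    have := hnat u hu w hw a b (by simpa only [zpow_natCast] using h)
    omega
  -- `(-u/w, 1/w)` is again a solution, with exponents `(a - b, -b)`
  obtain ⟨t, ht⟩ : ∃ t : ℕ, -b = t := ⟨(-b).toNat, by omega⟩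
  have h' : ((-1 * u * w⁻¹ : Kˣ) : K) * π ^ s + ((w⁻¹ : Kˣ) : K) * π ^ t = 1 := by
    rw [← zpow_natCast, ← zpow_natCast, ← hs, ← ht, zpow_sub₀ hπ, zpow_neg]
    have := zpow_ne_zero b hπ
    have := w.ne_zero
    push_cast
    field_simp
    linear_combination -h
  have := hnat _ (U.mul_mem (U.mul_mem hU hu) (U.inv_mem hw)) _ (U.inv_mem hw) s t h'
  omega

theorem stmt8_general (p n : ℕ) (hp : p.Prime) (hp5 : 5 ≤ p)
    (F : Type*) [Field F] [NumberField F] [IsGalois ℚ F]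
    (hdeg : Module.finrank ℚ F = p ^ n)
    (P : Ideal (𝓞 F)) (hP : P.IsPrime)
    (hram : Ideal.span {(p : 𝓞 F)} = P ^ (p ^ n))
    (Q : Ideal (𝓞 F)) (hQ : Q = Ideal.span {(2 : 𝓞 F)}) (hQprime : Q.IsPrime)
    (lam mu : F) (a b : ℤ)
    (ha : spanSingleton (nonZeroDivisors (𝓞 F)) lam
        = (Q : FractionalIdeal (nonZeroDivisors (𝓞 F)) F) ^ a)
    (hb : spanSingleton (nonZeroDivisors (𝓞 F)) mu
        = (Q : FractionalIdeal (nonZeroDivisors (𝓞 F)) F) ^ b)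
    (hsum : lam + mu = 1) :
    (a = 1 ∧ b = 0) ∨ (a = 0 ∧ b = 1) ∨ (a = -1 ∧ b = -1) := by
  have := Fact.mk hp
  subst hQ
  have hcard : Nat.card (𝓞 F ⧸ P) = p :=
    Ideal.natCard_quotient_of_span_natCast_eq_pow (by rwa [RingOfIntegers.rank, hdeg])
  have hstable (σ : F ≃ₐ[ℚ] F) := Ideal.le_comap_of_span_natCast_eq_pow_s8 hP
    (pow_ne_zero n hp.ne_zero) hram (galRestrict ℤ ℚ F (𝓞 F) σ : 𝓞 F →+* 𝓞 F)
  have h2unit : ¬IsUnit (2 : 𝓞 F) := fun h ↦ hQprime.ne_top (Ideal.span_singleton_eq_top.mpr h)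
  have hnotMem (k : ℕ) (hk0 : 0 < k) (hk : k < 5) : (k : 𝓞 F) ∉ P := fun h ↦
    absurd (Nat.le_of_dvd hk0 ((Ideal.natCast_mem_iff_dvd hcard k).mp h)) (by omega)
  obtain ⟨u, rfl⟩ := exists_unit_mul_zpow_of_spanSingleton_eq ha
  obtain ⟨w, rfl⟩ := exists_unit_mul_zpow_of_spanSingleton_eq hb
  refine exponents_of_unit_mul_zpow_add_eq_one
    (U := (Units.map (algebraMap (𝓞 F) F : 𝓞 F →* F)).range) ⟨-1, by simp⟩ (by simp) ?_
    ⟨u, rfl⟩ ⟨w, rfl⟩ hsum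
  rintro _ ⟨v₁, rfl⟩ _ ⟨v₂, rfl⟩ s t h
  refine exponents_of_unit_mul_two_pow_add_eq_one (u := v₁) (w := v₂) hP
    (by exact_mod_cast hnotMem 2 (by omega) (by omega))
    (by exact_mod_cast hnotMem 3 (by omega) (by omega)) h2unit
    (unit_sub_one_mem_or_add_one_mem hdeg hcard hstable)
    (fun _ ↦ unit_sub_one_mem_of_sub_one_mem_span_four hdeg hcard hstable h2unit) ?_
  apply FaithfulSMul.algebraMap_injective (𝓞 F) F
  simpa using h

/-- p ≥ 5 prime, F/ℚ Galois of degree p^n, p totally ramified, 2 inert with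
𝔮 = 2O_F.  Every solution of the {𝔮}-unit equation λ + μ = 1 has valuation
pattern (1,0), (0,1) or (-1,-1). -/
theorem stmt8 (p n : ℕ) (hp : p.Prime) (hp5 : 5 ≤ p) (hn : 1 ≤ n)
    (F : Type*) [Field F] [NumberField F] [IsGalois ℚ F]
    (hdeg : Module.finrank ℚ F = p ^ n)
    (P : Ideal (𝓞 F)) (hP : P.IsPrime)
    (hram : Ideal.span {(p : 𝓞 F)} = P ^ (p ^ n))
    (Q : Ideal (𝓞 F)) (hQ : Q = Ideal.span {(2 : 𝓞 F)}) (hQprime : Q.IsPrime)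
    (lam mu : F) (a b : ℤ)
    (ha : spanSingleton (nonZeroDivisors (𝓞 F)) lam
        = (Q : FractionalIdeal (nonZeroDivisors (𝓞 F)) F) ^ a)
    (hb : spanSingleton (nonZeroDivisors (𝓞 F)) mu
        = (Q : FractionalIdeal (nonZeroDivisors (𝓞 F)) F) ^ b)
    (hsum : lam + mu = 1) :
    (a = 1 ∧ b = 0) ∨ (a = 0 ∧ b = 1) ∨ (a = -1 ∧ b = -1) :=
  stmt8_general p n hp hp5 F hdeg P hP hram Q hQ hQprime lam mu a b ha hb hsum
end

section
/- Let p ≥ 5 be prime and F/Q a Galois extension of degree p^n with p totally ramified and 2 inert, 𝔮 = 2O_F. If λ, μ are {𝔮}-units with λ + μ = 1 and ord_𝔮(λ) ≥ 2, a contradiction follows; i.e., no such solution has ord_𝔮(λ) ≥ 2. -/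
/-!
As ord_𝔮 λ ≥ 2, λ is an algebraic integer divisible by 4, so μ = 1 - λ is an integer prime to 𝔮
and hence a unit. Every Galois conjugate of μ is ≡ 1 (mod 4), so N(μ) ≡ 1 (mod 4), and since 2 is
not a unit this forces N(μ) = 1. Because 𝔭 is totally ramified, the Galois group fixes 𝔭 and acts
trivially on 𝓞/𝔭 ≅ 𝔽_p, so N(μ) ≡ μ^(p^n) ≡ μ (mod 𝔭). Hence λ ∈ 𝔭, so 𝔭 contains 𝔮 and
thus both 2 and the odd prime p, which is absurd.
-/

open NumberField FractionalIdeal IsDedekindDomain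
open scoped nonZeroDivisors

section FractionalIdeal

variable {R K : Type*} [CommRing R] [Field K] [Algebra R K] [IsFractionRing R K]

theorem exists_span_singleton_eq_of_spanSingleton_eq_coeIdeal {x : K} {I : Ideal R}
    (h : spanSingleton R⁰ x = I) : ∃ r : R, algebraMap R K r = x ∧ Ideal.span {r} = I := by
  obtain ⟨r, -, rfl⟩ := (mem_coeIdeal R⁰).mp (h ▸ mem_spanSingleton_self R⁰ x)
  exact ⟨r, rfl, (coeIdeal_inj (K := K)).mp (by rw [coeIdeal_span_singleton, h])⟩

theorem isUnit_of_spanSingleton_eq_zpow [IsDedekindDomain R] {I : Ideal R} {r : R} (hr : r ∉ I)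
    {b : ℤ} (h : spanSingleton R⁰ (algebraMap R K r) = (I : FractionalIdeal R⁰ K) ^ b) :
    IsUnit r := by
  rcases le_or_gt b 0 with hb | hb
  · lift -b to ℕ using neg_nonneg.mpr hb with c hc
    have hinv :
        spanSingleton R⁰ (algebraMap R K r)⁻¹ = ((I ^ c : Ideal R) : FractionalIdeal R⁰ K) := by
      rw [← spanSingleton_inv, h, coeIdeal_pow, ← zpow_natCast, hc, zpow_neg]
    obtain ⟨s, hs, -⟩ := exists_span_singleton_eq_of_spanSingleton_eq_coeIdeal hinv
    have hr0 : algebraMap R K r ≠ 0 := by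
      rw [map_ne_zero_iff _ (IsFractionRing.injective R K)]
      rintro rfl
      exact hr I.zero_mem
    refine IsUnit.of_mul_eq_one s (IsFractionRing.injective R K ?_)
    rw [map_mul, hs, mul_inv_cancel₀ hr0, map_one]
  · lift b to ℕ using hb.le with c
    obtain ⟨r', hr', hspan⟩ := exists_span_singleton_eq_of_spanSingleton_eq_coeIdeal
      (h.trans (by rw [zpow_natCast, coeIdeal_pow]))
    cases IsFractionRing.injective R K hr'
    exact absurd (Ideal.pow_le_self (by omega) (hspan ▸ Ideal.mem_span_singleton_self r)) hr

end FractionalIdeal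

section PrimeCard

variable {R : Type*} [Ring R] {p : ℕ}

theorem nonempty_ringEquiv_zmod_of_natCard_eq (hp : p.Prime) (hR : Nat.card R = p) :
    Nonempty (ZMod p ≃+* R) := by
  have : Finite R := Nat.finite_of_card_ne_zero (hR ▸ hp.ne_zero)
  have := Fintype.ofFinite R
  exact ⟨ZMod.ringEquivOfPrime R hp (Fintype.card_eq_nat_card.trans hR)⟩

theorem pow_prime_pow_eq_self_of_natCard_eq (hp : p.Prime) (hR : Nat.card R = p) (x : R) (n : ℕ) :
    x ^ p ^ n = x := by
  have := Fact.mk hp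
  obtain ⟨e⟩ := nonempty_ringEquiv_zmod_of_natCard_eq hp hR
  obtain ⟨y, rfl⟩ := e.surjective x
  rw [← map_pow, ZMod.pow_card_pow]

theorem RingHom.eq_id_of_natCard_eq_prime_s9 (hp : p.Prime) (hR : Nat.card R = p) (f : R →+* R) :
    f = RingHom.id R := by
  obtain ⟨e⟩ := nonempty_ringEquiv_zmod_of_natCard_eq hp hR
  ext x
  obtain ⟨y, rfl⟩ := e.surjective x
  exact RingHom.congr_fun (RingHom.ext_zmod (f.comp e) e) y

end PrimeCard

theorem Ideal.le_comap_of_pow_eq_span_natCast {R : Type*} [CommRing R] {P : Ideal R} [P.IsPrime]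
    {e p : ℕ} (he : e ≠ 0) (h : P ^ e = Ideal.span {(p : R)}) (f : R →+* R) :
    P ≤ P.comap f := by
  have hpP : (p : R) ∈ P := Ideal.pow_le_self he (h ▸ Ideal.mem_span_singleton_self _)
  refine Ideal.IsPrime.le_of_pow_le (n := e) ?_
  rw [h, Ideal.span_le, Set.singleton_subset_iff, SetLike.mem_coe, Ideal.mem_comap, map_natCast]
  exact hpP

theorem Ideal.Quotient.mk_apply_eq_of_natCard_eq_prime_s9 {R : Type*} [CommRing R] {P : Ideal R}
    {p : ℕ} (hp : p.Prime) (hP : Nat.card (R ⧸ P) = p) {f : R →+* R} (hf : P ≤ P.comap f)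
    (x : R) : Ideal.Quotient.mk P (f x) = Ideal.Quotient.mk P x := by
  rw [← Ideal.quotientMap_mk (H := hf),
    RingHom.eq_id_of_natCard_eq_prime_s9 hp hP (Ideal.quotientMap P f hf), RingHom.id_apply]

theorem Ideal.Quotient.mk_span_natCast_apply_eq_one {R : Type*} [CommRing R] {c : ℕ} {x : R}
    (hx : Ideal.Quotient.mk (Ideal.span {(c : R)}) x = 1) (f : R →+* R) :
    Ideal.Quotient.mk (Ideal.span {(c : R)}) (f x) = 1 := by
  rw [← map_one (Ideal.Quotient.mk _), Ideal.Quotient.eq, Ideal.mem_span_singleton] at hx ⊢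
  simpa only [map_sub, map_one, map_natCast] using map_dvd f hx

theorem Int.eq_one_of_isUnit_of_mk_span_four_eq_one {R : Type*} [CommRing R] [IsDomain R]
    [CharZero R] (h2 : ¬IsUnit (2 : R)) {n : ℤ} (hn : IsUnit n)
    (h : Ideal.Quotient.mk (Ideal.span {(4 : R)}) n = 1) : n = 1 := by
  refine (Int.isUnit_iff.mp hn).resolve_right fun hn ↦ h2 ?_
  rw [hn, ← map_one (Ideal.Quotient.mk _), Ideal.Quotient.eq] at h
  obtain ⟨y, hy⟩ := Ideal.mem_span_singleton'.mp h
  have h2y : (2 : R) * (2 * y + 1) = 0 := by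
    push_cast at hy
    linear_combination hy
  have h1 : 2 * y + 1 = 0 := (mul_eq_zero.mp h2y).resolve_left two_ne_zero
  exact .of_mul_eq_one (-y) (by linear_combination -h1)

section NumberField

variable {K : Type*} [Field K] [NumberField K]

theorem absNorm_eq_of_span_eq_pow_finrank {p : ℕ} {P : Ideal (𝓞 K)}
    (hram : Ideal.span {(p : 𝓞 K)} = P ^ Module.finrank ℚ K) : Ideal.absNorm P = p := by
  rw [← pow_left_inj (Module.finrank_pos (R := ℚ) (M := K)).ne', ← map_pow, ← hram,
    Ideal.absNorm_span_natCast, RingOfIntegers.rank]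

theorem natCard_quotient_eq_of_span_eq_pow_finrank {p : ℕ} {P : Ideal (𝓞 K)}
    (hram : Ideal.span {(p : 𝓞 K)} = P ^ Module.finrank ℚ K) : Nat.card (𝓞 K ⧸ P) = p := by
  rw [← Submodule.cardQuot_apply, ← Ideal.absNorm_apply, absNorm_eq_of_span_eq_pow_finrank hram]

variable [IsGalois ℚ K]

theorem RingOfIntegers.prod_galRestrict_eq_norm (x : 𝓞 K) :
    ∏ σ : K ≃ₐ[ℚ] K, galRestrict ℤ ℚ K (𝓞 K) σ x = (Algebra.norm ℤ x : 𝓞 K) := by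
  apply IsFractionRing.injective (𝓞 K) K
  simp only [map_prod, algebraMap_galRestrict_apply, ← Algebra.norm_eq_prod_automorphisms,
    ← Algebra.coe_norm_int, map_intCast]

theorem RingOfIntegers.mk_norm_eq_pow_finrank (I : Ideal (𝓞 K)) (x : 𝓞 K)
    (hx : ∀ σ : K ≃ₐ[ℚ] K,
      Ideal.Quotient.mk I (galRestrict ℤ ℚ K (𝓞 K) σ x) = Ideal.Quotient.mk I x) :
    Ideal.Quotient.mk I (Algebra.norm ℤ x : 𝓞 K) = Ideal.Quotient.mk I x ^ Module.finrank ℚ K := by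
  rw [← prod_galRestrict_eq_norm, map_prod, Finset.prod_congr rfl fun σ _ ↦ hx σ,
    Finset.prod_const, Finset.card_univ, Fintype.card_eq_nat_card, IsGalois.card_aut_eq_finrank]

theorem RingOfIntegers.mk_norm_eq_one_of_mk_eq_one (c : ℕ) {x : 𝓞 K}
    (hx : Ideal.Quotient.mk (Ideal.span {(c : 𝓞 K)}) x = 1) :
    Ideal.Quotient.mk (Ideal.span {(c : 𝓞 K)}) (Algebra.norm ℤ x : 𝓞 K) = 1 := by
  rw [mk_norm_eq_pow_finrank _ x fun σ ↦ ?_, hx, one_pow]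
  exact (Ideal.Quotient.mk_span_natCast_apply_eq_one hx (galRestrict ℤ ℚ K (𝓞 K) σ : _ →+* _)).trans
    hx.symm

theorem RingOfIntegers.norm_eq_one_of_isUnit_of_sub_one_mem (h2 : ¬IsUnit (2 : 𝓞 K)) {x : 𝓞 K}
    (hx : IsUnit x) (h4 : x - 1 ∈ Ideal.span {(4 : 𝓞 K)}) : Algebra.norm ℤ x = 1 := by
  refine Int.eq_one_of_isUnit_of_mk_span_four_eq_one h2 (hx.map _) ?_
  have hx4 : Ideal.Quotient.mk (Ideal.span {((4 : ℕ) : 𝓞 K)}) x = 1 := by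
    rwa [← map_one (Ideal.Quotient.mk _), Ideal.Quotient.eq, Nat.cast_ofNat]
  simpa using mk_norm_eq_one_of_mk_eq_one 4 hx4

theorem RingOfIntegers.mk_galRestrict_eq_of_span_eq_pow_finrank {p : ℕ} (hp : p.Prime)
    {P : Ideal (𝓞 K)} [P.IsPrime] (hram : Ideal.span {(p : 𝓞 K)} = P ^ Module.finrank ℚ K)
    (σ : K ≃ₐ[ℚ] K) (x : 𝓞 K) :
    Ideal.Quotient.mk P (galRestrict ℤ ℚ K (𝓞 K) σ x) = Ideal.Quotient.mk P x :=
  Ideal.Quotient.mk_apply_eq_of_natCard_eq_prime_s9 hp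
    (natCard_quotient_eq_of_span_eq_pow_finrank hram)
    (Ideal.le_comap_of_pow_eq_span_natCast (Module.finrank_pos (R := ℚ) (M := K)).ne' hram.symm
      (galRestrict ℤ ℚ K (𝓞 K) σ : 𝓞 K →+* 𝓞 K)) x

theorem RingOfIntegers.mk_norm_eq_self {p n : ℕ} (hp : p.Prime)
    (hdeg : Module.finrank ℚ K = p ^ n) {P : Ideal (𝓞 K)} [P.IsPrime]
    (hram : Ideal.span {(p : 𝓞 K)} = P ^ p ^ n) (x : 𝓞 K) :
    Ideal.Quotient.mk P (Algebra.norm ℤ x : 𝓞 K) = Ideal.Quotient.mk P x := by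
  rw [← hdeg] at hram
  rw [mk_norm_eq_pow_finrank P x fun σ ↦ mk_galRestrict_eq_of_span_eq_pow_finrank hp hram σ x,
    hdeg, pow_prime_pow_eq_self_of_natCard_eq hp (natCard_quotient_eq_of_span_eq_pow_finrank hram)]

end NumberField

theorem Ideal.eq_top_of_natCast_mem_of_coprime {R : Type*} [CommRing R] {I : Ideal R} {a b : ℕ}
    (hab : a.Coprime b) (ha : (a : R) ∈ I) (hb : (b : R) ∈ I) : I = ⊤ := by
  obtain ⟨u, v, h⟩ := (Nat.Coprime.isCoprime hab).intCast (R := R)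
  push_cast at h
  rw [Ideal.eq_top_iff_one, ← h]
  exact I.add_mem (I.mul_mem_left _ ha) (I.mul_mem_left _ hb)

theorem stmt9_general (p n : ℕ) (hp : p.Prime) (hp5 : 5 ≤ p)
    (F : Type*) [Field F] [NumberField F] [IsGalois ℚ F]
    (hdeg : Module.finrank ℚ F = p ^ n)
    (P : Ideal (𝓞 F)) (hP : P.IsPrime)
    (hram : Ideal.span {(p : 𝓞 F)} = P ^ (p ^ n))
    (Q : Ideal (𝓞 F)) (hQ : Q = Ideal.span {(2 : 𝓞 F)}) (hQprime : Q.IsPrime)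
    (lam mu : F) (a b : ℤ)
    (ha : spanSingleton (nonZeroDivisors (𝓞 F)) lam
        = (Q : FractionalIdeal (nonZeroDivisors (𝓞 F)) F) ^ a)
    (hb : spanSingleton (nonZeroDivisors (𝓞 F)) mu
        = (Q : FractionalIdeal (nonZeroDivisors (𝓞 F)) F) ^ b)
    (hsum : lam + mu = 1) :
    ¬ 2 ≤ a := by
  intro ha2
  lift a to ℕ using (by omega) with k
  obtain ⟨l, rfl, hl⟩ := exists_span_singleton_eq_of_spanSingleton_eq_coeIdeal
    (ha.trans (by rw [zpow_natCast, coeIdeal_pow]))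
  have hlQ : l ∈ Q ^ 2 := Ideal.pow_le_pow_right (by omega) (hl ▸ Ideal.mem_span_singleton_self l)
  have hl4 : l ∈ Ideal.span {(4 : 𝓞 F)} := by
    rw [hQ, Ideal.span_singleton_pow] at hlQ
    norm_num at hlQ
    exact hlQ
  obtain rfl : mu = algebraMap (𝓞 F) F (1 - l) := by
    rw [map_sub, map_one]
    linear_combination hsum
  have hm : IsUnit (1 - l) := by
    refine isUnit_of_spanSingleton_eq_zpow (fun hmQ ↦ hQprime.ne_top ?_) hb
    rw [Ideal.eq_top_iff_one, ← sub_add_cancel 1 l]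
    exact Q.add_mem hmQ (Ideal.pow_le_self two_ne_zero hlQ)
  have hN : Algebra.norm ℤ (1 - l) = 1 :=
    RingOfIntegers.norm_eq_one_of_isUnit_of_sub_one_mem
      (fun h ↦ hQprime.ne_top (hQ ▸ Ideal.span_singleton_eq_top.mpr h)) hm (by simpa using hl4)
  have hlP : l ∈ P := by
    have := RingOfIntegers.mk_norm_eq_self hp hdeg hram (1 - l)
    rw [hN, Int.cast_one, map_one, ← map_one (Ideal.Quotient.mk P), Ideal.Quotient.eq] at this
    simpa using this
  have hQP : Q ≤ P := hP.le_of_pow_le (by rwa [← hl, Ideal.span_singleton_le_iff_mem])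
  have h2P : ((2 : ℕ) : 𝓞 F) ∈ P := hQP (by simp [hQ])
  have hpP : (p : 𝓞 F) ∈ P :=
    Ideal.pow_le_self (pow_ne_zero n hp.ne_zero) (hram ▸ Ideal.mem_span_singleton_self _)
  exact hP.ne_top (Ideal.eq_top_of_natCast_mem_of_coprime
    (Nat.coprime_two_left.mpr (hp.odd_of_ne_two (by omega))) h2P hpP)

/-- p ≥ 5 prime, F/ℚ Galois of degree p^n, p totally ramified, 2 inert with
𝔮 = 2O_F.  Every solution of the {𝔮}-unit equation λ + μ = 1 has valuation
pattern (1,0), (0,1) or (-1,-1). -/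
theorem stmt9 (p n : ℕ) (hp : p.Prime) (hp5 : 5 ≤ p) (hn : 1 ≤ n)
    (F : Type*) [Field F] [NumberField F] [IsGalois ℚ F]
    (hdeg : Module.finrank ℚ F = p ^ n)
    (P : Ideal (𝓞 F)) (hP : P.IsPrime)
    (hram : Ideal.span {(p : 𝓞 F)} = P ^ (p ^ n))
    (Q : Ideal (𝓞 F)) (hQ : Q = Ideal.span {(2 : 𝓞 F)}) (hQprime : Q.IsPrime)
    (lam mu : F) (a b : ℤ)
    (ha : spanSingleton (nonZeroDivisors (𝓞 F)) lam
        = (Q : FractionalIdeal (nonZeroDivisors (𝓞 F)) F) ^ a)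
    (hb : spanSingleton (nonZeroDivisors (𝓞 F)) mu
        = (Q : FractionalIdeal (nonZeroDivisors (𝓞 F)) F) ^ b)
    (hsum : lam + mu = 1) :
    ¬ 2 ≤ a :=
  stmt9_general p n hp hp5 F hdeg P hP hram Q hQ hQprime lam mu a b ha hb hsum
end

section
/- Let p ≥ 5 be a prime and F/Q a Galois extension of degree p^n with p totally ramified and 2 inert, 𝔮 = 2O_F. Then every solution (λ, μ) of the {𝔮}-unit equation λ + μ = 1 satisfies max(|ord_𝔮(λ)|, |ord_𝔮(μ)|) ≤ 4 and ord_𝔮(λμ) ≡ 1 (mod 3). -/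
/-!
Since `p` is totally ramified, the prime `P` above it is Galois-stable with residue field `𝔽_p`,
so the Galois group acts trivially on `𝓞_F / P`; as `[F : ℚ]` is a power of `p`, this gives
`x ≡ N(x) (mod P)` for every `x ∈ 𝓞_F`. Hence units are `≡ ±1 (mod P)`, and for `p ≥ 5` no two
units sum to `1`. If `ord(λ) = k > 0`, then `μ = 1 - λ` is a unit: `N(μ) = 1` would put `λ`, hence
`2`, in `P`, while `N(μ) = -1` and `k ≥ 2` would give `-1 ≡ N(μ) ≡ 1 (mod 4)`; so `k = 1`.
The symmetries `(λ, μ) ↦ (μ, λ)` and `(λ, μ) ↦ (1/λ, -μ/λ)` move every other sign pattern of the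
valuations to this one, which leaves only `(1, 0)`, `(0, 1)` and `(-1, -1)`.
-/

open NumberField FractionalIdeal IsDedekindDomain
open Module
open scoped nonZeroDivisors

namespace Ideal

variable {R : Type*} [CommRing R] {P : Ideal R}

theorem map_le_self_of_span_natCast_eq_pow [P.IsPrime] {m e : ℕ} (he : e ≠ 0)
    (h : span {(m : R)} = P ^ e) {G : Type*} [FunLike G R R] [RingHomClass G R R] (σ : G) :
    P.map σ ≤ P := by
  apply IsPrime.le_of_pow_le (n := e)
  rw [← Ideal.map_pow, ← h, map_span, Set.image_singleton, map_natCast, h]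
  exact pow_le_self he

theorem natCast_notMem_of_coprime (hP : P ≠ ⊤) {m k : ℕ} (hk : (k : R) ∈ P)
    (h : m.Coprime k) : (m : R) ∉ P := by
  intro hm
  obtain ⟨u, v, huv⟩ := (Nat.isCoprime_iff_coprime.mpr h).map (Int.castRingHom R)
  apply hP
  rw [eq_top_iff_one, ← huv]
  simp only [eq_intCast, Int.cast_natCast]
  exact add_mem (mul_mem_left _ _ hm) (mul_mem_left _ _ hk)

theorem add_ne_one_of_isUnit_of_sub_norm_mem (hres : ∀ x : R, x - Algebra.norm ℤ x ∈ P)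
    (h3P : (3 : R) ∉ P) {u v : R} (hu : IsUnit u) (hv : IsUnit v) : u + v ≠ 1 := by
  intro huv
  have hmem : (1 - Algebra.norm ℤ u - Algebra.norm ℤ v : R) ∈ P := by
    convert P.add_mem (hres u) (hres v) using 1
    rw [← huv]
    ring
  apply h3P
  rcases Int.isUnit_iff.mp (hu.map (Algebra.norm ℤ)) with h | h <;>
    rcases Int.isUnit_iff.mp (hv.map (Algebra.norm ℤ)) with h' | h' <;>
    simp only [h, h', Int.cast_one, Int.cast_neg] at hmem
  · simpa using P.mul_mem_left (-3) hmem
  · simpa using P.mul_mem_left 3 hmem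
  · simpa using P.mul_mem_left 3 hmem
  · convert hmem using 1
    ring

variable {p : ℕ} [Fact p.Prime]

theorem nonempty_ringEquiv_zmod_of_card_quotient (hcard : Nat.card (R ⧸ P) = p) :
    Nonempty (ZMod p ≃+* R ⧸ P) := by
  have : Finite (R ⧸ P) := Nat.finite_of_card_ne_zero (hcard ▸ (Fact.out : p.Prime).ne_zero)
  have : Fintype (R ⧸ P) := Fintype.ofFinite _
  exact ⟨ZMod.ringEquivOfPrime _ Fact.out (Nat.card_eq_fintype_card (α := R ⧸ P) ▸ hcard)⟩

theorem exists_intCast_sub_mem_of_card_quotient (hcard : Nat.card (R ⧸ P) = p) (x : R) :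
    ∃ z : ℤ, x - z ∈ P := by
  obtain ⟨e⟩ := nonempty_ringEquiv_zmod_of_card_quotient hcard
  obtain ⟨w, hw⟩ := e.surjective (Quotient.mk P x)
  obtain ⟨z, rfl⟩ := ZMod.intCast_surjective w
  exact ⟨z, Quotient.eq.mp (by rw [← hw, map_intCast, map_intCast])⟩

theorem pow_prime_pow_sub_mem_of_card_quotient (hcard : Nat.card (R ⧸ P) = p) (x : R) (n : ℕ) :
    x ^ p ^ n - x ∈ P := by
  obtain ⟨e⟩ := nonempty_ringEquiv_zmod_of_card_quotient hcard
  obtain ⟨w, hw⟩ := e.surjective (Quotient.mk P x)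
  exact Quotient.eq.mp (by rw [map_pow, ← hw, ← map_pow, ZMod.pow_card_pow])

theorem apply_sub_mem_of_card_quotient (hcard : Nat.card (R ⧸ P) = p) {G : Type*} [FunLike G R R]
    [RingHomClass G R R] (σ : G) (hσ : P.map σ ≤ P) (x : R) : σ x - x ∈ P := by
  obtain ⟨z, hz⟩ := exists_intCast_sub_mem_of_card_quotient hcard x
  have hσz : σ x - z ∈ P := by
    simpa only [map_sub, map_intCast] using hσ (mem_map_of_mem σ hz)
  simpa using sub_mem hσz hz

end Ideal

namespace NumberField

variable {F : Type*} [Field F] [NumberField F]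

theorem absNorm_span_natCast (m : ℕ) :
    Ideal.absNorm (Ideal.span {(m : 𝓞 F)}) = m ^ finrank ℚ F := by
  have : (m : 𝓞 F) = algebraMap ℤ (𝓞 F) m := (map_natCast _ m).symm
  rw [Ideal.absNorm_span_singleton, this, Algebra.norm_algebraMap, RingOfIntegers.rank,
    Int.natAbs_pow, Int.natAbs_natCast]

theorem absNorm_eq_of_span_natCast_eq_pow {P : Ideal (𝓞 F)} {p : ℕ}
    (h : Ideal.span {(p : 𝓞 F)} = P ^ finrank ℚ F) : Ideal.absNorm P = p := by
  have := absNorm_span_natCast (F := F) p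
  rw [h, map_pow] at this
  exact Nat.pow_left_injective finrank_pos.ne' this

variable [IsGalois ℚ F]

theorem prod_galRestrict_eq_intCast_norm (x : 𝓞 F) :
    ∏ σ : F ≃ₐ[ℚ] F, galRestrict ℤ ℚ F (𝓞 F) σ x = (Algebra.norm ℤ x : 𝓞 F) := by
  apply RingOfIntegers.coe_injective
  rw [map_prod]
  simp only [algebraMap_galRestrict_apply]
  rw [← Algebra.norm_eq_prod_automorphisms, ← Algebra.coe_norm_int]
  simp

theorem intCast_norm_sub_pow_mem {I : Ideal (𝓞 F)} {x c : 𝓞 F}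
    (h : ∀ σ : F ≃ₐ[ℚ] F, galRestrict ℤ ℚ F (𝓞 F) σ x - c ∈ I) :
    (Algebra.norm ℤ x : 𝓞 F) - c ^ finrank ℚ F ∈ I := by
  rw [← prod_galRestrict_eq_intCast_norm, ← Ideal.Quotient.eq, map_prod,
    Finset.prod_congr rfl fun σ _ => Ideal.Quotient.eq.mpr (h σ), Finset.prod_const,
    Finset.card_univ, ← Nat.card_eq_fintype_card, IsGalois.card_aut_eq_finrank, map_pow]

theorem sub_intCast_norm_mem_of_span_natCast_eq_pow {p n : ℕ} [Fact p.Prime]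
    (hdeg : finrank ℚ F = p ^ n) {P : Ideal (𝓞 F)} [P.IsPrime]
    (hram : Ideal.span {(p : 𝓞 F)} = P ^ p ^ n) (x : 𝓞 F) :
    x - Algebra.norm ℤ x ∈ P := by
  have hcard : Nat.card (𝓞 F ⧸ P) = p := by
    rw [← Submodule.cardQuot_apply, ← Ideal.absNorm_apply,
      absNorm_eq_of_span_natCast_eq_pow (hdeg ▸ hram)]
  have hpn : p ^ n ≠ 0 := pow_ne_zero n (Fact.out : p.Prime).ne_zero
  have hfrob := Ideal.pow_prime_pow_sub_mem_of_card_quotient hcard x n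
  have hnorm : (Algebra.norm ℤ x : 𝓞 F) - x ^ p ^ n ∈ P := hdeg ▸ intCast_norm_sub_pow_mem
    fun σ ↦ Ideal.apply_sub_mem_of_card_quotient hcard _
      (Ideal.map_le_self_of_span_natCast_eq_pow hpn hram _) x
  convert P.neg_mem (P.add_mem hfrob hnorm) using 1
  ring

end NumberField

section SUnitEquation

variable {R K : Type*} [CommRing R] [IsDedekindDomain R] [Field K] [Algebra R K]
  [IsFractionRing R K] {Q : Ideal R}

structure IsSUnitSolution (Q : Ideal R) (x y : K) (a b : ℤ) : Prop where
  spanSingleton_left : spanSingleton R⁰ x = (Q : FractionalIdeal R⁰ K) ^ a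
  spanSingleton_right : spanSingleton R⁰ y = (Q : FractionalIdeal R⁰ K) ^ b
  add_eq_one : x + y = 1

theorem exists_algebraMap_eq_of_spanSingleton_eq_pow {x : K} {k : ℕ}
    (h : spanSingleton R⁰ x = (Q : FractionalIdeal R⁰ K) ^ (k : ℤ)) :
    ∃ y : R, algebraMap R K y = x ∧ Ideal.span {y} = Q ^ k := by
  rw [zpow_natCast, ← coeIdeal_pow] at h
  obtain ⟨y, -, rfl⟩ := (mem_coeIdeal _).mp (h ▸ mem_spanSingleton_self R⁰ x)
  refine ⟨y, rfl, coeIdeal_injective (K := K) ?_⟩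
  simp only [coeIdeal_span_singleton, h]

namespace IsSUnitSolution

variable {x y : K} {a b : ℤ}

theorem symm (h : IsSUnitSolution Q x y a b) : IsSUnitSolution Q y x b a :=
  ⟨h.2, h.1, by rw [add_comm, h.3]⟩

theorem inv (hQ : Q ≠ ⊥) (h : IsSUnitSolution Q x y a b) :
    IsSUnitSolution Q x⁻¹ (-(y / x)) (-a) (b - a) := by
  have hQ' : (Q : FractionalIdeal R⁰ K) ≠ 0 := coeIdeal_ne_zero.mpr hQ
  have hx : x ≠ 0 := by
    rintro rfl
    exact zpow_ne_zero a hQ' (by rw [← h.1, spanSingleton_zero])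
  refine ⟨?_, ?_, ?_⟩
  · rw [← spanSingleton_inv, h.1, zpow_neg]
  · rw [← spanSingleton_eq_spanSingleton.mpr ⟨-1, neg_one_smul R (y / x)⟩, div_eq_mul_inv,
      ← spanSingleton_mul_spanSingleton, ← spanSingleton_inv, h.1, h.2, ← zpow_neg,
      ← zpow_add₀ hQ', sub_eq_add_neg]
  · field_simp
    linear_combination -h.3

theorem exists_add_eq_one {k j : ℕ} (h : IsSUnitSolution Q x y k j) :
    ∃ l m : R, l + m = 1 ∧ Ideal.span {l} = Q ^ k ∧ Ideal.span {m} = Q ^ j := by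
  obtain ⟨l, rfl, hl⟩ := exists_algebraMap_eq_of_spanSingleton_eq_pow h.1
  obtain ⟨m, rfl, hm⟩ := exists_algebraMap_eq_of_spanSingleton_eq_pow h.2
  exact ⟨l, m, IsFractionRing.injective R K (by simpa using h.3), hl, hm⟩

theorem right_nonpos_of_left_pos (hQ : Q ≠ ⊤) (h : IsSUnitSolution Q x y a b) (ha : 0 < a) :
    b ≤ 0 := by
  by_contra! hb
  lift a to ℕ using ha.le
  lift b to ℕ using hb.le
  obtain ⟨l, m, hlm, hl, hm⟩ := h.exists_add_eq_one
  have hlQ : l ∈ Q := Ideal.pow_le_self (by omega) (hl ▸ Ideal.mem_span_singleton_self l)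
  have hmQ : m ∈ Q := Ideal.pow_le_self (by omega) (hm ▸ Ideal.mem_span_singleton_self m)
  exact hQ ((Q.eq_top_iff_one).mpr (hlm ▸ Q.add_mem hlQ hmQ))

theorem right_eq_zero_of_left_pos (hQ : Q ≠ ⊥) (hQ' : Q ≠ ⊤) (h : IsSUnitSolution Q x y a b)
    (ha : 0 < a) : b = 0 := by
  refine le_antisymm (h.right_nonpos_of_left_pos hQ' ha) (not_lt.mp fun hb ↦ ?_)
  -- for `b < 0`, both exponents of `(1/y, -x/y)` are positive
  have := (h.symm.inv hQ).right_nonpos_of_left_pos hQ' (neg_pos.mpr hb)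
  omega

end IsSUnitSolution

end SUnitEquation

namespace NumberField

variable {F : Type*} [Field F] [NumberField F] [IsGalois ℚ F] {P : Ideal (𝓞 F)}

theorem intCast_norm_sub_one_mem_span_intCast {d : ℤ} {m : 𝓞 F}
    (hm : m - 1 ∈ Ideal.span {(d : 𝓞 F)}) :
    (Algebra.norm ℤ m : 𝓞 F) - 1 ∈ Ideal.span {(d : 𝓞 F)} := by
  rw [← one_pow (finrank ℚ F)]
  refine intCast_norm_sub_pow_mem fun σ ↦ ?_
  rw [Ideal.mem_span_singleton] at hm ⊢
  simpa using map_dvd (galRestrict ℤ ℚ F (𝓞 F) σ) hm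

theorem eq_one_of_span_eq_two_pow [P.IsPrime] (hres : ∀ x : 𝓞 F, x - Algebra.norm ℤ x ∈ P)
    (h2P : (2 : 𝓞 F) ∉ P) (h2 : ¬IsUnit (2 : 𝓞 F)) {l m : 𝓞 F} {k : ℕ} (hk : k ≠ 0)
    (hl : Ideal.span {l} = Ideal.span {2} ^ k) (hm : IsUnit m) (hlm : l + m = 1) : k = 1 := by
  rw [Ideal.span_singleton_pow, Ideal.span_singleton_eq_span_singleton] at hl
  rcases Int.isUnit_iff.mp (hm.map (Algebra.norm ℤ)) with h | h
  · have hlP : l ∈ P := by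
      have := P.neg_mem (hres m)
      rwa [h, Int.cast_one, neg_sub, ← hlm, add_sub_cancel_right] at this
    obtain ⟨c, hc⟩ := hl.dvd
    exact (h2P (‹P.IsPrime›.mem_of_pow_mem k (hc ▸ P.mul_mem_right c hlP))).elim
  · by_contra hk1
    have h4 : (2 : 𝓞 F) ^ 2 ∣ m - 1 := by
      rw [eq_sub_of_add_eq' hlm, sub_sub_cancel_left, dvd_neg]
      exact (pow_dvd_pow 2 (by omega)).trans hl.symm.dvd
    have hm1 : m - 1 ∈ Ideal.span {((4 : ℤ) : 𝓞 F)} := by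
      rw [Ideal.mem_span_singleton]
      convert h4 using 1
      norm_num
    have h42 := intCast_norm_sub_one_mem_span_intCast hm1
    rw [h, Ideal.mem_span_singleton] at h42
    apply h2
    refine isUnit_of_dvd_one ((mul_dvd_mul_iff_left (two_ne_zero' (𝓞 F))).mp ?_)
    rw [← dvd_neg]
    convert h42 using 1 <;> norm_num

theorem IsSUnitSolution.exponents_eq_of_left_pos [P.IsPrime]
    (hres : ∀ x : 𝓞 F, x - Algebra.norm ℤ x ∈ P) (h2P : (2 : 𝓞 F) ∉ P) (h2 : ¬IsUnit (2 : 𝓞 F))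
    {x y : F} {a b : ℤ} (h : IsSUnitSolution (Ideal.span {(2 : 𝓞 F)}) x y a b) (ha : 0 < a) :
    a = 1 ∧ b = 0 := by
  obtain rfl := h.right_eq_zero_of_left_pos (Ideal.span_singleton_eq_bot.not.mpr two_ne_zero)
    (Ideal.span_singleton_eq_top.not.mpr h2) ha
  lift a to ℕ using ha.le
  obtain ⟨l, m, hlm, hl, hm⟩ := h.exists_add_eq_one (j := 0)
  rw [pow_zero, Ideal.one_eq_top, Ideal.span_singleton_eq_top] at hm
  exact ⟨by exact_mod_cast eq_one_of_span_eq_two_pow hres h2P h2 (by omega) hl hm hlm, rfl⟩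

theorem IsSUnitSolution.exponents_mem [P.IsPrime]
    (hres : ∀ x : 𝓞 F, x - Algebra.norm ℤ x ∈ P) (h2P : (2 : 𝓞 F) ∉ P) (h3P : (3 : 𝓞 F) ∉ P)
    (h2 : ¬IsUnit (2 : 𝓞 F)) {x y : F} {a b : ℤ}
    (h : IsSUnitSolution (Ideal.span {(2 : 𝓞 F)}) x y a b) :
    a = 1 ∧ b = 0 ∨ a = 0 ∧ b = 1 ∨ a = -1 ∧ b = -1 := by
  have hQ : Ideal.span {(2 : 𝓞 F)} ≠ ⊥ := Ideal.span_singleton_eq_bot.not.mpr two_ne_zero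
  have key {x y : F} {a b : ℤ} (h : IsSUnitSolution (Ideal.span {(2 : 𝓞 F)}) x y a b)
      (ha : 0 < a) : a = 1 ∧ b = 0 :=
    h.exponents_eq_of_left_pos hres h2P h2 ha
  rcases lt_trichotomy a 0 with ha | rfl | ha
  · have := key (h.inv hQ) (by omega)
    omega
  · rcases lt_trichotomy b 0 with hb | rfl | hb
    · have := key (h.symm.inv hQ) (by omega)
      omega
    · obtain ⟨l, m, hlm, hl, hm⟩ := h.exists_add_eq_one (k := 0) (j := 0)
      rw [pow_zero, Ideal.one_eq_top, Ideal.span_singleton_eq_top] at hl hm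
      exact (Ideal.add_ne_one_of_isUnit_of_sub_norm_mem hres h3P hl hm hlm).elim
    · have := key h.symm hb
      omega
  · have := key h ha
    omega

end NumberField

theorem stmt12_general (p n : ℕ) (hp : p.Prime) (hp5 : 5 ≤ p)
    (F : Type*) [Field F] [NumberField F] [IsGalois ℚ F]
    (hdeg : Module.finrank ℚ F = p ^ n)
    (P : Ideal (𝓞 F)) (hP : P.IsPrime)
    (hram : Ideal.span {(p : 𝓞 F)} = P ^ (p ^ n))
    (Q : Ideal (𝓞 F)) (hQ : Q = Ideal.span {(2 : 𝓞 F)}) (hQprime : Q.IsPrime)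
    (lam mu : F) (a b : ℤ)
    (ha : spanSingleton (nonZeroDivisors (𝓞 F)) lam
        = (Q : FractionalIdeal (nonZeroDivisors (𝓞 F)) F) ^ a)
    (hb : spanSingleton (nonZeroDivisors (𝓞 F)) mu
        = (Q : FractionalIdeal (nonZeroDivisors (𝓞 F)) F) ^ b)
    (hsum : lam + mu = 1) :
    max |a| |b| ≤ 4 ∧ a + b ≡ 1 [ZMOD 3] := by
  subst hQ
  have : Fact p.Prime := ⟨hp⟩
  have hres := NumberField.sub_intCast_norm_mem_of_span_natCast_eq_pow hdeg hram
  have hpP : (p : 𝓞 F) ∈ P :=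
    Ideal.pow_le_self (pow_ne_zero n hp.ne_zero) (hram ▸ Ideal.mem_span_singleton_self _)
  have h2P : (2 : 𝓞 F) ∉ P := by
    exact_mod_cast Ideal.natCast_notMem_of_coprime hP.ne_top hpP
      ((Nat.coprime_primes Nat.prime_two hp).mpr (by omega))
  have h3P : (3 : 𝓞 F) ∉ P := by
    exact_mod_cast Ideal.natCast_notMem_of_coprime hP.ne_top hpP
      ((Nat.coprime_primes Nat.prime_three hp).mpr (by omega))
  have h2 : ¬IsUnit (2 : 𝓞 F) := Ideal.span_singleton_eq_top.not.mp hQprime.ne_top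
  rcases (IsSUnitSolution.mk ha hb hsum).exponents_mem hres h2P h3P h2 with
    ⟨rfl, rfl⟩ | ⟨rfl, rfl⟩ | ⟨rfl, rfl⟩ <;> decide

/-- p ≥ 5 prime, F/ℚ Galois of degree p^n, p totally ramified, 2 inert with
𝔮 = 2O_F.  Every solution of the {𝔮}-unit equation λ + μ = 1 has valuation
pattern (1,0), (0,1) or (-1,-1). -/
theorem stmt12 (p n : ℕ) (hp : p.Prime) (hp5 : 5 ≤ p) (hn : 1 ≤ n)
    (F : Type*) [Field F] [NumberField F] [IsGalois ℚ F]
    (hdeg : Module.finrank ℚ F = p ^ n)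
    (P : Ideal (𝓞 F)) (hP : P.IsPrime)
    (hram : Ideal.span {(p : 𝓞 F)} = P ^ (p ^ n))
    (Q : Ideal (𝓞 F)) (hQ : Q = Ideal.span {(2 : 𝓞 F)}) (hQprime : Q.IsPrime)
    (lam mu : F) (a b : ℤ)
    (ha : spanSingleton (nonZeroDivisors (𝓞 F)) lam
        = (Q : FractionalIdeal (nonZeroDivisors (𝓞 F)) F) ^ a)
    (hb : spanSingleton (nonZeroDivisors (𝓞 F)) mu
        = (Q : FractionalIdeal (nonZeroDivisors (𝓞 F)) F) ^ b)
    (hsum : lam + mu = 1) :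
    max |a| |b| ≤ 4 ∧ a + b ≡ 1 [ZMOD 3] :=
  stmt12_general p n hp hp5 F hdeg P hP hram Q hQ hQprime lam mu a b ha hb hsum
end

section
/- Let p be an odd prime and n ≥ 1. If p is a Wieferich prime (2^(p-1) ≡ 1 mod p²), then 2 is not inert in the n-th layer Q_{n,p} of the cyclotomic Z_p-extension; that is, the residue degree of 2 in Q_{n,p} is strictly less than p^n. -/
open NumberField FractionalIdeal IsDedekindDomain

private lemma wief_dvd (p : ℕ) (hp : p.Prime)
    (hw : (2 : ZMod (p ^ 2)) ^ (p - 1) = 1) :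
    ∀ k : ℕ, (p : ℤ) ^ (k + 2) ∣ 2 ^ ((p - 1) * p ^ k) - 1 := by
  have base : (p : ℤ) ^ 2 ∣ 2 ^ (p - 1) - 1 := by
    have h0 : ((2 ^ (p - 1) - 1 : ℤ) : ZMod (p ^ 2)) = 0 := by
      push_cast [hw]; ring
    have := (ZMod.intCast_zmod_eq_zero_iff_dvd _ _).1 h0
    exact_mod_cast this
  intro k
  induction k with
  | zero => simpa using base
  | succ k ih =>
    set a : ℤ := 2 ^ ((p - 1) * p ^ k) with ha
    have hpa : ((a : ℤ) : ZMod p) = 1 := by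
      have h1 : (p : ℤ) ∣ a - 1 :=
        dvd_trans (dvd_pow_self _ (Nat.succ_ne_zero _)) ih
      have := (ZMod.intCast_zmod_eq_zero_iff_dvd (a - 1) p).2 h1
      rwa [Int.cast_sub, Int.cast_one, sub_eq_zero] at this
    have hstep : (p : ℤ) ∣ ∑ i ∈ Finset.range p, a ^ i := by
      rw [← ZMod.intCast_zmod_eq_zero_iff_dvd]
      push_cast
      simp [hpa, Finset.sum_const, Finset.card_range]
    have key : (p : ℤ) ^ (k + 3) ∣ a ^ p - 1 := by
      rw [← geom_sum_mul]
      have h3 : (p : ℤ) ^ (k + 3) = p * p ^ (k + 2) := by ring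
      rw [h3]
      exact mul_dvd_mul hstep ih
    have hap : a ^ p = 2 ^ ((p - 1) * p ^ (k + 1)) := by
      rw [ha, ← pow_mul]
      congr 1
      rw [pow_succ]
      ring
    rw [show k + 1 + 2 = k + 3 by ring, ← hap]
    exact key

open Polynomial in
private lemma card_le_of_fix {R : Type*} [CommRing R] [IsDomain R] [Fintype R] (D : ℕ)
    (hD : 1 < 2 ^ D) (hfix : ∀ x : R, x ^ 2 ^ D = x) : Fintype.card R ≤ 2 ^ D := by
  classical
  have h1 : (X : R[X]).degree < ((X : R[X]) ^ (2 ^ D)).degree := by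
    rw [degree_X_pow, degree_X]; exact_mod_cast hD
  have hdeg : ((X : R[X]) ^ (2 ^ D) - X).natDegree = 2 ^ D := by
    rw [natDegree_eq_of_degree_eq (degree_sub_eq_left_of_degree_lt h1), natDegree_X_pow]
  have hne : ((X : R[X]) ^ (2 ^ D) - X) ≠ 0 :=
    ne_zero_of_natDegree_gt (n := 0) (by rw [hdeg]; omega)
  have hsub : (Finset.univ : Finset R) ⊆ ((X : R[X]) ^ (2 ^ D) - X).roots.toFinset := by
    intro x _
    rw [Multiset.mem_toFinset, mem_roots hne]
    simp [IsRoot.def, sub_eq_zero, hfix x]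
  calc Fintype.card R = (Finset.univ : Finset R).card := rfl
    _ ≤ ((X : R[X]) ^ (2 ^ D) - X).roots.toFinset.card := Finset.card_le_card hsub
    _ ≤ Multiset.card ((X : R[X]) ^ (2 ^ D) - X).roots := Multiset.toFinset_card_le _
    _ ≤ ((X : R[X]) ^ (2 ^ D) - X).natDegree := card_roots' _
    _ = 2 ^ D := hdeg

private lemma aux_inertia_le {S : Type*} [CommRing S] (P : Ideal S)
    [P.IsMaximal] (hcom : Ideal.comap (algebraMap ℤ S) P = Ideal.span {(2 : ℤ)})
    [Fintype (S ⧸ P)] (D : ℕ) (hD : 1 ≤ D)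
    (hfix : ∀ x : S ⧸ P, x ^ 2 ^ D = x) :
    Ideal.inertiaDeg' (Ideal.span {(2 : ℤ)}) P ≤ D := by
  have hmax2 : (Ideal.span {(2 : ℤ)}).IsMaximal :=
    PrincipalIdealRing.isMaximal_of_irreducible Int.prime_two.irreducible
  letI : Field (ℤ ⧸ Ideal.span {(2 : ℤ)}) := Ideal.Quotient.field _
  letI : Field (S ⧸ P) := Ideal.Quotient.field P
  have e : (ℤ ⧸ Ideal.span {(2 : ℤ)}) ≃ ZMod 2 := (Int.quotientSpanNatEquivZMod 2).toEquiv
  letI : Fintype (ℤ ⧸ Ideal.span {(2 : ℤ)}) := Fintype.ofEquiv (ZMod 2) e.symm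
  have hcard2 : Fintype.card (ℤ ⧸ Ideal.span {(2 : ℤ)}) = 2 := by
    rw [Fintype.card_congr e]
    exact ZMod.card 2
  have hcard : Fintype.card (S ⧸ P) ≤ 2 ^ D :=
    card_le_of_fix D (Nat.one_lt_two_pow (by omega)) hfix
  rw [Ideal.inertiaDeg', dif_pos hcom]
  letI := Ideal.Quotient.algebraQuotientOfLEComap (le_of_eq hcom.symm)
  have hc := Module.card_eq_pow_finrank (K := ℤ ⧸ Ideal.span {(2 : ℤ)}) (V := S ⧸ P)
  rw [hc, hcard2] at hcard
  exact (Nat.pow_le_pow_iff_right one_lt_two).1 hcard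

set_option maxHeartbeats 1000000 in
set_option synthInstance.maxHeartbeats 400000 in
/-- If p is an odd Wieferich prime, then 2 is not inert in the n-th layer of
the cyclotomic ℤ_p-extension: the residue degree of any prime above 2
is strictly less than p^n. -/
theorem stmt15 (p n : ℕ) (hp : p.Prime) (hodd : Odd p) (hn : 1 ≤ n)
    (hw : (2 : ZMod (p ^ 2)) ^ (p - 1) = 1)
    (K : Type*) [Field K] [CharZero K] (m : ℕ+) (hm : (m : ℕ) = p ^ (n + 1))
    [IsCyclotomicExtension {(m : ℕ)} ℚ K]
    (F : IntermediateField ℚ K) (hF : Module.finrank ℚ F = p ^ n) :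
    ¬ (Ideal.span {(2 : 𝓞 F)}).IsPrime ∧
    ∀ P : Ideal (𝓞 F), P.IsPrime → (2 : 𝓞 F) ∈ P →
      Ideal.inertiaDeg' (Ideal.span {(2 : ℤ)}) P < p ^ n := by
  haveI : Fact p.Prime := ⟨hp⟩
  have hp3 : 3 ≤ p := by
    have h2 := hp.two_le
    have := Nat.odd_iff.1 hodd
    omega
  -- the exponent D
  set D : ℕ := (p - 1) * p ^ (n - 1) with hDdef
  have hD1 : 1 ≤ D := by
    have : 1 ≤ p ^ (n - 1) := Nat.one_le_pow _ _ hp.pos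
    have : 1 ≤ p - 1 := by omega
    calc 1 = 1 * 1 := by ring
    _ ≤ (p - 1) * p ^ (n - 1) := Nat.mul_le_mul ‹1 ≤ p - 1› (Nat.one_le_pow _ _ hp.pos)
  have hDlt : D < p ^ n := by
    have h1 : (p - 1) * p ^ (n - 1) < p * p ^ (n - 1) :=
      (Nat.mul_lt_mul_right (Nat.pow_pos hp.pos)).2 (by omega)
    have h2 : p * p ^ (n - 1) = p ^ n := by
      rw [← pow_succ']
      congr 1
      omega
    omega
  -- the arithmetic input : p ^ (n+1) ∣ 2 ^ D - 1
  have hdvdZ : (p : ℤ) ^ (n + 1) ∣ 2 ^ D - 1 := by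
    have := wief_dvd p hp hw (n - 1)
    rwa [show n - 1 + 2 = n + 1 by omega] at this
  have h2Dpos : 1 ≤ 2 ^ D := Nat.one_le_two_pow
  have hdvdN : p ^ (n + 1) ∣ 2 ^ D - 1 := by
    have : ((p ^ (n + 1) : ℕ) : ℤ) ∣ ((2 ^ D - 1 : ℕ) : ℤ) := by
      push_cast [Nat.cast_sub h2Dpos]
      exact_mod_cast hdvdZ
    exact_mod_cast this
  obtain ⟨t, ht⟩ := hdvdN
  have h2D : 2 ^ D = p ^ (n + 1) * t + 1 := by omega
  -- cyclotomic set-up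
  haveI : NumberField K := IsCyclotomicExtension.numberField {(m : ℕ)} ℚ K
  set p' : ℕ+ := ⟨p, hp.pos⟩ with hp'def
  haveI : Fact (Nat.Prime (p' : ℕ)) := ⟨hp⟩
  have hm' : m = p' ^ (n + 1) := by
    apply PNat.coe_injective
    rw [hm, PNat.pow_coe]
    rfl
  haveI hcyc : IsCyclotomicExtension {p ^ (n + 1)} ℚ K :=
    hm ▸ (inferInstance : IsCyclotomicExtension {(m : ℕ)} ℚ K)
  set ζ : K := IsCyclotomicExtension.zeta (p ^ (n + 1)) ℚ K with hζdef
  have hζ : IsPrimitiveRoot ζ (p ^ (n + 1)) :=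
    IsCyclotomicExtension.zeta_spec (p ^ (n + 1)) ℚ K
  set η : 𝓞 K := hζ.toInteger with hηdef
  have hηtop : Algebra.adjoin ℤ ({η} : Set (𝓞 K)) = ⊤ := by
    have h := (hζ.integralPowerBasis).adjoin_gen_eq_top
    rwa [hζ.integralPowerBasis_gen] at h
  have hη1 : η ^ p ^ (n + 1) = 1 := by
    have h := hζ.toInteger_isPrimitiveRoot.pow_eq_one
    exact h
  -- the fixed-point property for any prime of 𝓞 F above 2
  have hfix_all : ∀ P : Ideal (𝓞 F), P.IsPrime → (2 : 𝓞 F) ∈ P →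
      ∀ x : (𝓞 F) ⧸ P, x ^ 2 ^ D = x := by
    intro P hP h2P
    haveI := hP
    -- a prime of 𝓞 K above P
    obtain ⟨Q, hQprime, hQcom⟩ :=
      Ideal.exists_ideal_over_prime_of_isIntegral_of_isDomain P
        (by
          rw [(RingHom.injective_iff_ker_eq_bot _).1
            (FaithfulSMul.algebraMap_injective (𝓞 F) (𝓞 K))]
          exact bot_le)
    haveI := hQprime
    have h2Q : (2 : 𝓞 K) ∈ Q := by
      have h : (2 : 𝓞 F) ∈ Q.comap (algebraMap (𝓞 F) (𝓞 K)) := hQcom.symm ▸ h2P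
      rw [Ideal.mem_comap, map_ofNat] at h
      exact h
    -- the quotient ring has characteristic 2
    have h2z : (2 : (𝓞 K) ⧸ Q) = 0 := by
      rw [show (2 : (𝓞 K) ⧸ Q) = Ideal.Quotient.mk Q 2 from (map_ofNat _ 2).symm,
        Ideal.Quotient.eq_zero_iff_mem]
      exact h2Q
    have hchar : ringChar ((𝓞 K) ⧸ Q) = 2 := by
      have hdvd : ringChar ((𝓞 K) ⧸ Q) ∣ 2 := ringChar.dvd (by exact_mod_cast h2z)
      rcases (Nat.dvd_prime Nat.prime_two).1 hdvd with h1 | h2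
      · exfalso
        haveI := ringChar.of_eq h1
        haveI := CharP.CharOne.subsingleton (R := (𝓞 K) ⧸ Q)
        exact one_ne_zero (Subsingleton.elim (1 : (𝓞 K) ⧸ Q) 0)
      · exact h2
    haveI : CharP ((𝓞 K) ⧸ Q) 2 := ringChar.of_eq hchar
    haveI : Fact (Nat.Prime 2) := ⟨Nat.prime_two⟩
    haveI : ExpChar ((𝓞 K) ⧸ Q) 2 := inferInstance
    set φ : ((𝓞 K) ⧸ Q) →+* ((𝓞 K) ⧸ Q) := iterateFrobenius ((𝓞 K) ⧸ Q) 2 D with hφdef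
    have hφη : φ (Ideal.Quotient.mk Q η) = Ideal.Quotient.mk Q η := by
      rw [hφdef, iterateFrobenius_def, h2D, pow_add, pow_one, pow_mul, ← _root_.map_pow, hη1]
      simp
    have hmem : ∀ y : 𝓞 K, φ (Ideal.Quotient.mk Q y) = Ideal.Quotient.mk Q y := by
      intro y
      have hy : y ∈ Algebra.adjoin ℤ ({η} : Set (𝓞 K)) := by rw [hηtop]; trivial
      induction hy using Algebra.adjoin_induction with
      | mem z hz =>
        rw [Set.mem_singleton_iff] at hz
        subst hz
        exact hφη
      | algebraMap r =>
        rw [algebraMap_int_eq, eq_intCast, map_intCast, map_intCast]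
      | add x y hx hy hx' hy' => rw [_root_.map_add, _root_.map_add, hx', hy']
      | mul x y hx hy hx' hy' => rw [_root_.map_mul, _root_.map_mul, hx', hy']
    have hfixK : ∀ x : (𝓞 K) ⧸ Q, x ^ 2 ^ D = x := by
      intro x
      obtain ⟨y, rfl⟩ := Ideal.Quotient.mk_surjective x
      rw [← iterateFrobenius_def (R := (𝓞 K) ⧸ Q) (p := 2)]
      exact hmem y
    -- descend to 𝓞 F ⧸ P
    intro x
    have hle : P ≤ Q.comap (algebraMap (𝓞 F) (𝓞 K)) := le_of_eq hQcom.symm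
    have hψinj : Function.Injective (Ideal.quotientMap Q (algebraMap (𝓞 F) (𝓞 K)) hle) :=
      Ideal.quotientMap_injective' (le_of_eq hQcom)
    apply hψinj
    rw [_root_.map_pow]
    exact hfixK _
  -- the common ingredients for both parts
  have h2ne : (2 : 𝓞 F) ≠ 0 := by
    intro h
    exact two_ne_zero (by exact_mod_cast congrArg (algebraMap (𝓞 F) F) h)
  have hcomap : ∀ P : Ideal (𝓞 F), P.IsPrime → (2 : 𝓞 F) ∈ P →
      Ideal.comap (algebraMap ℤ (𝓞 F)) P = Ideal.span {(2 : ℤ)} := by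
    intro P hP h2P
    have hmax2 : (Ideal.span {(2 : ℤ)}).IsMaximal :=
      PrincipalIdealRing.isMaximal_of_irreducible Int.prime_two.irreducible
    refine (hmax2.eq_of_le ?_ ?_).symm
    · intro h
      apply hP.ne_top
      rw [Ideal.eq_top_iff_one]
      have h1 : (1 : ℤ) ∈ Ideal.comap (algebraMap ℤ (𝓞 F)) P := h ▸ trivial
      simpa using h1
    · rw [Ideal.span_le, Set.singleton_subset_iff]
      show algebraMap ℤ (𝓞 F) 2 ∈ P
      rw [map_ofNat]
      exact h2P
  constructor
  · -- part 1 : span {2} is not prime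
    intro hpr
    have h2mem : (2 : 𝓞 F) ∈ Ideal.span {(2 : 𝓞 F)} := Ideal.mem_span_singleton_self _
    have hbot : Ideal.span {(2 : 𝓞 F)} ≠ ⊥ := by
      rw [Ne, Ideal.span_singleton_eq_bot]
      exact h2ne
    letI : Fintype ((𝓞 F) ⧸ Ideal.span {(2 : 𝓞 F)}) :=
      @Fintype.ofFinite _ (Ideal.finiteQuotientOfFreeOfNeBot _ hbot)
    haveI : (Ideal.span {(2 : 𝓞 F)}).IsMaximal := hpr.isMaximal hbot
    have hfix := hfix_all _ hpr h2mem
    have hcard_le : Fintype.card ((𝓞 F) ⧸ Ideal.span {(2 : 𝓞 F)}) ≤ 2 ^ D :=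
      card_le_of_fix D (Nat.one_lt_two_pow (by omega)) hfix
    have hcard_eq : Fintype.card ((𝓞 F) ⧸ Ideal.span {(2 : 𝓞 F)}) = 2 ^ p ^ n := by
      rw [← Nat.card_eq_fintype_card, ← Submodule.cardQuot_apply, ← Ideal.absNorm_apply,
        Ideal.absNorm_span_singleton]
      have hb := Module.Free.chooseBasis ℤ (𝓞 F)
      rw [show (2 : 𝓞 F) = algebraMap ℤ (𝓞 F) 2 from (map_ofNat _ 2).symm,
        Algebra.norm_algebraMap_of_basis hb]
      rw [show Fintype.card (Module.Free.ChooseBasisIndex ℤ (𝓞 F)) = Module.finrank ℤ (𝓞 F) from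
        (Module.finrank_eq_card_chooseBasisIndex ℤ (𝓞 F)).symm]
      rw [NumberField.RingOfIntegers.rank F, hF]
      simp [Int.natAbs_pow]
    rw [hcard_eq] at hcard_le
    have := (Nat.pow_le_pow_iff_right one_lt_two).1 hcard_le
    omega
  · -- part 2 : residue degrees are < p ^ n
    intro P hP h2P
    haveI := hP
    have hbot : P ≠ ⊥ := by
      intro h
      rw [h, Ideal.mem_bot] at h2P
      exact h2ne h2P
    haveI : P.IsMaximal := hP.isMaximal hbot
    letI : Fintype ((𝓞 F) ⧸ P) := @Fintype.ofFinite _ (Ideal.finiteQuotientOfFreeOfNeBot _ hbot)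
    have h := aux_inertia_le P (hcomap P hP h2P) D hD1
      (hfix_all P hP h2P)
    omega
end
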